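/- arXiv:1811.00826 — 7 statements merged into one kernel-verified Lean document; each statement's English description precedes it below -/
import Mathlib

section
/- Let b, c > 0 and 0 < α < 2 < β, and define h(t) = (1/2)t² − c t^α − b t^β for t > 0. Suppose that the maximum value of φ(t) = (1/2)t^{2−α} − b t^{β−α} over (0,∞) is strictly greater than c. Then there exist 0 < R₀ < R₁ such that h(R₀) = 0 = h(R₁), h(t) > 0 if and only if t ∈ (R₀, R₁), h has a local strict minimum at negative level in (0, R₀), and h has a global strict maximum at positive level in (R₀, R₁). -/
/-!
Write `h(t) = t^α/2 · (Φ(t) − 2c)` and `h'(t) = t^(α−1) · (ψ(t) − αc)` with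
`Φ(t) = t^(2−α) − 2b t^(β−α)` and `ψ(t) = t^(2−α) − bβ t^(β−α)`. Both have the form
`t^p − K t^q` with `0 < p < q`, `K > 0`: such a function starts at `0`, increases up to its
unique critical point and then decreases to `−∞`, so it crosses every positive level below its
maximum exactly twice. The crossings of `Φ` at `2c` are `R₀ < R₁`. Since `h → 0` at `0⁺` and
`h > 0` somewhere, `h'` is positive somewhere, so `ψ` also crosses `αc` twice, at `t₁ < t₂`;
hence `h` decreases, increases, then decreases, which makes `t₁` a strict local minimum at a
negative level and `t₂` the strict global maximum.
-/

open Real Filter Topology Set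

noncomputable def powDiff (p q K t : ℝ) : ℝ := t ^ p - K * t ^ q

section powDiff

variable {p q K : ℝ}

theorem continuous_powDiff (hp : 0 ≤ p) (hq : 0 ≤ q) : Continuous (powDiff p q K) :=
  (continuous_rpow_const hp).sub (continuous_const.mul (continuous_rpow_const hq))

theorem tendsto_powDiff_nhdsGT_zero (hp : 0 < p) (hq : 0 < q) :
    Tendsto (powDiff p q K) (𝓝[>] 0) (𝓝 0) := by
  have h := (continuous_powDiff (K := K) hp.le hq.le).tendsto 0
  rw [powDiff, zero_rpow hp.ne', zero_rpow hq.ne', mul_zero, sub_zero] at h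
  exact h.mono_left nhdsWithin_le_nhds

theorem rpow_mul_powDiff (a : ℝ) {t : ℝ} (ht : 0 < t) :
    t ^ a * powDiff p q K t = t ^ (a + p) - K * t ^ (a + q) := by
  rw [powDiff, rpow_add ht, rpow_add ht]; ring

theorem tendsto_powDiff_atTop (hq : 0 < q) (hpq : p < q) (hK : 0 < K) :
    Tendsto (powDiff p q K) atTop atBot := by
  have hfactor : Tendsto (fun t : ℝ => t ^ (p - q) - K) atTop (𝓝 (0 - K)) := by
    have h := tendsto_rpow_neg_atTop (sub_pos.2 hpq)
    rw [neg_sub] at h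
    exact h.sub_const K
  refine ((tendsto_rpow_atTop hq).atTop_mul_neg (by linarith) hfactor).congr' ?_
  filter_upwards [eventually_gt_atTop 0] with t ht
  rw [powDiff, mul_sub, ← rpow_add ht, add_sub_cancel, mul_comm]

theorem hasDerivAt_powDiff {t : ℝ} (ht : 0 < t) :
    HasDerivAt (powDiff p q K) (t ^ (p - 1) * (p - K * q * t ^ (q - p))) t := by
  have hderiv := (hasDerivAt_rpow_const (p := p) (Or.inl ht.ne')).sub
    ((hasDerivAt_rpow_const (p := q) (Or.inl ht.ne')).const_mul K)
  refine hderiv.congr_deriv ?_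
  have hexp : t ^ (p - 1) * t ^ (q - p) = t ^ (q - 1) := by rw [← rpow_add ht]; ring_nf
  linear_combination K * q * hexp

theorem exists_strictMonoOn_strictAntiOn_powDiff (hp : 0 < p) (hpq : p < q) (hK : 0 < K) :
    ∃ m > 0, StrictMonoOn (powDiff p q K) (Ioc 0 m) ∧ StrictAntiOn (powDiff p q K) (Ici m) := by
  have hq : 0 < q := hp.trans hpq
  have hqp : 0 < q - p := sub_pos.2 hpq
  set m := (p / (K * q)) ^ (q - p)⁻¹
  have hm : 0 < m := by positivity
  have hcrit : K * q * m ^ (q - p) = p := by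
    rw [← rpow_mul (by positivity), inv_mul_cancel₀ hqp.ne', rpow_one]
    field_simp
  have hbelow {t : ℝ} (ht : 0 < t) (htm : t < m) : 0 < p - K * q * t ^ (q - p) := by
    have : K * q * t ^ (q - p) < K * q * m ^ (q - p) := by gcongr
    linarith
  have habove {t : ℝ} (hmt : m < t) : p - K * q * t ^ (q - p) < 0 := by
    have : K * q * m ^ (q - p) < K * q * t ^ (q - p) := by gcongr
    linarith
  refine ⟨m, hm, ?_, ?_⟩
  · refine strictMonoOn_of_deriv_pos (convex_Ioc 0 m) (continuous_powDiff hp.le hq.le).continuousOn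
      fun t ht => ?_
    rw [interior_Ioc] at ht
    rw [(hasDerivAt_powDiff ht.1).deriv]
    exact mul_pos (rpow_pos_of_pos ht.1 _) (hbelow ht.1 ht.2)
  · refine strictAntiOn_of_deriv_neg (convex_Ici m) (continuous_powDiff hp.le hq.le).continuousOn
      fun t ht => ?_
    rw [interior_Ici] at ht
    rw [(hasDerivAt_powDiff (hm.trans ht)).deriv]
    exact mul_neg_of_pos_of_neg (rpow_pos_of_pos (hm.trans ht) _) (habove ht)

end powDiff

structure LevelCrossing (f : ℝ → ℝ) (L r₀ r₁ : ℝ) : Prop where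
  pos : 0 < r₀
  lt : r₀ < r₁
  apply_left : f r₀ = L
  apply_right : f r₁ = L
  lt_of_mem_Ioo_zero : ∀ t ∈ Ioo 0 r₀, f t < L
  gt_of_mem_Ioo : ∀ t ∈ Ioo r₀ r₁, L < f t
  lt_of_mem_Ioi : ∀ t ∈ Ioi r₁, f t < L

namespace LevelCrossing

variable {f k w : ℝ → ℝ} {L r₀ r₁ : ℝ}

theorem lt_apply_iff (hf : LevelCrossing f L r₀ r₁) {t : ℝ} (ht : 0 < t) :
    L < f t ↔ t ∈ Ioo r₀ r₁ := by
  refine ⟨fun hLt => ?_, hf.gt_of_mem_Ioo t⟩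
  by_contra hmem
  rcases not_and_or.1 hmem with htr₀ | htr₁
  · rcases (not_lt.1 htr₀).lt_or_eq with htr₀ | rfl
    · exact (hf.lt_of_mem_Ioo_zero t ⟨ht, htr₀⟩).not_gt hLt
    · exact hLt.ne' hf.apply_left
  · rcases (not_lt.1 htr₁).lt_or_eq with htr₁ | rfl
    · exact (hf.lt_of_mem_Ioi t htr₁).not_gt hLt
    · exact hLt.ne' hf.apply_right

theorem strictAntiOn_Ioc_of_hasDerivAt (hk : LevelCrossing k L r₀ r₁)
    (hf : ∀ t > 0, HasDerivAt f (w t * (k t - L)) t) (hw : ∀ t > 0, 0 < w t) :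
    StrictAntiOn f (Ioc 0 r₀) := by
  refine strictAntiOn_of_deriv_neg (convex_Ioc 0 r₀)
    (fun t ht => (hf t ht.1).continuousAt.continuousWithinAt) fun t ht => ?_
  rw [interior_Ioc] at ht
  rw [(hf t ht.1).deriv]
  exact mul_neg_of_pos_of_neg (hw t ht.1) (sub_neg.2 (hk.lt_of_mem_Ioo_zero t ht))

theorem strictMonoOn_Icc_of_hasDerivAt (hk : LevelCrossing k L r₀ r₁)
    (hf : ∀ t > 0, HasDerivAt f (w t * (k t - L)) t) (hw : ∀ t > 0, 0 < w t) :
    StrictMonoOn f (Icc r₀ r₁) := by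
  refine strictMonoOn_of_deriv_pos (convex_Icc r₀ r₁)
    (fun t ht => (hf t (hk.pos.trans_le ht.1)).continuousAt.continuousWithinAt) fun t ht => ?_
  rw [interior_Icc] at ht
  rw [(hf t (hk.pos.trans ht.1)).deriv]
  exact mul_pos (hw t (hk.pos.trans ht.1)) (sub_pos.2 (hk.gt_of_mem_Ioo t ht))

theorem strictAntiOn_Ici_of_hasDerivAt (hk : LevelCrossing k L r₀ r₁)
    (hf : ∀ t > 0, HasDerivAt f (w t * (k t - L)) t) (hw : ∀ t > 0, 0 < w t) :
    StrictAntiOn f (Ici r₁) := by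
  have hr₁ : 0 < r₁ := hk.pos.trans hk.lt
  refine strictAntiOn_of_deriv_neg (convex_Ici r₁)
    (fun t ht => (hf t (hr₁.trans_le ht)).continuousAt.continuousWithinAt) fun t ht => ?_
  rw [interior_Ici] at ht
  rw [(hf t (hr₁.trans ht)).deriv]
  exact mul_neg_of_pos_of_neg (hw t (hr₁.trans ht)) (sub_neg.2 (hk.lt_of_mem_Ioi t ht))

end LevelCrossing

theorem exists_levelCrossing_of_strictMonoOn_of_strictAntiOn {f : ℝ → ℝ} {m L : ℝ} (hm : 0 < m)
    (hf : ContinuousOn f (Ioi 0)) (hmono : StrictMonoOn f (Ioc 0 m))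
    (hanti : StrictAntiOn f (Ici m)) (hzero : ∀ᶠ t in 𝓝[>] 0, f t < L)
    (htop : ∀ᶠ t in atTop, f t < L) (hLm : L < f m) : ∃ r₀ r₁, LevelCrossing f L r₀ r₁ := by
  obtain ⟨ε, hεL, hε⟩ := (hzero.and (Ioo_mem_nhdsGT hm)).exists
  obtain ⟨T, hTL, hmT⟩ := (htop.and (eventually_gt_atTop m)).exists
  obtain ⟨r₀, hr₀, hfr₀⟩ := intermediate_value_Icc hε.2.le
    (hf.mono fun t ht => hε.1.trans_le ht.1) ⟨hεL.le, hLm.le⟩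
  obtain ⟨r₁, hr₁, hfr₁⟩ := intermediate_value_Icc' hmT.le
    (hf.mono fun t ht => hm.trans_le ht.1) ⟨hTL.le, hLm.le⟩
  have hr₀m : r₀ < m := hr₀.2.lt_of_ne (by rintro rfl; exact hLm.ne' hfr₀)
  have hmr₁ : m < r₁ := hr₁.1.lt_of_ne (by rintro rfl; exact hLm.ne hfr₁.symm)
  have hr₀pos : 0 < r₀ := hε.1.trans_le hr₀.1
  refine ⟨r₀, r₁, hr₀pos, hr₀m.trans hmr₁, hfr₀, hfr₁, fun t ht => ?_, fun t ht => ?_,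
    fun t ht => ?_⟩
  · exact hfr₀ ▸ hmono ⟨ht.1, (ht.2.trans hr₀m).le⟩ ⟨hr₀pos, hr₀m.le⟩ ht.2
  · rcases le_or_gt t m with htm | hmt
    · exact hfr₀ ▸ hmono ⟨hr₀pos, hr₀m.le⟩ ⟨hr₀pos.trans ht.1, htm⟩ ht.1
    · exact hfr₁ ▸ hanti hmt.le hr₁.1 ht.2
  · exact hfr₁ ▸ hanti hr₁.1 (hr₁.1.trans (le_of_lt ht)) ht

theorem exists_levelCrossing_powDiff {p q K L : ℝ} (hp : 0 < p) (hpq : p < q) (hK : 0 < K)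
    (hL : 0 < L) (hex : ∃ t > 0, L < powDiff p q K t) :
    ∃ r₀ r₁, LevelCrossing (powDiff p q K) L r₀ r₁ := by
  have hq : 0 < q := hp.trans hpq
  obtain ⟨m, hm, hmono, hanti⟩ := exists_strictMonoOn_strictAntiOn_powDiff hp hpq hK
  obtain ⟨t, ht, hLt⟩ := hex
  have hLm : L < powDiff p q K m := by
    rcases le_total t m with htm | hmt
    · exact hLt.trans_le (hmono.monotoneOn ⟨ht, htm⟩ ⟨hm, le_rfl⟩ htm)
    · exact hLt.trans_le (hanti.antitoneOn self_mem_Ici hmt hmt)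
  exact exists_levelCrossing_of_strictMonoOn_of_strictAntiOn hm
    (continuous_powDiff hp.le hq.le).continuousOn hmono hanti
    ((tendsto_powDiff_nhdsGT_zero hp hq).eventually (gt_mem_nhds hL))
    ((tendsto_powDiff_atTop hq hpq hK).eventually (eventually_lt_atBot L)) hLm

theorem AntitoneOn.nonpos_of_tendsto_nhdsGT_zero {f : ℝ → ℝ} {a s : ℝ}
    (hf : AntitoneOn f (Ioc 0 a)) (h0 : Tendsto f (𝓝[>] 0) (𝓝 0)) (hs : s ∈ Ioc 0 a) :
    f s ≤ 0 := by
  refine ge_of_tendsto h0 ?_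
  filter_upwards [Ioo_mem_nhdsGT hs.1] with u hu
  exact hf ⟨hu.1, hu.2.le.trans hs.2⟩ hs hu.2.le

theorem exists_pos_deriv_of_tendsto_nhdsGT_zero {f f' : ℝ → ℝ}
    (hf : ∀ t > 0, HasDerivAt f (f' t) t) (h0 : Tendsto f (𝓝[>] 0) (𝓝 0)) {x : ℝ}
    (hx : 0 < x) (hfx : 0 < f x) : ∃ t > 0, 0 < f' t := by
  by_contra! hf'
  have hanti : AntitoneOn f (Ioc 0 x) := by
    refine antitoneOn_of_hasDerivWithinAt_nonpos (convex_Ioc 0 x)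
      (fun t ht => (hf t ht.1).continuousAt.continuousWithinAt)
      (fun t ht => (hf t ?_).hasDerivWithinAt) fun t ht => hf' t ?_ <;>
    · rw [interior_Ioc] at ht
      exact ht.1
  exact (hanti.nonpos_of_tendsto_nhdsGT_zero h0 ⟨hx, le_rfl⟩).not_gt hfx

theorem eventually_nhdsNE_lt_of_strictAntiOn_of_strictMonoOn {f : ℝ → ℝ} {a b c : ℝ}
    (hab : a < b) (hbc : b < c) (hanti : StrictAntiOn f (Ioc a b))
    (hmono : StrictMonoOn f (Icc b c)) : ∀ᶠ s in 𝓝[≠] b, f b < f s := by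
  filter_upwards [nhdsWithin_le_nhds (Ioo_mem_nhds hab hbc), self_mem_nhdsWithin] with s hs hsb
  rcases lt_or_gt_of_ne hsb with hsb | hbs
  · exact hanti ⟨hs.1, hsb.le⟩ ⟨hab, le_rfl⟩ hsb
  · exact hmono ⟨le_rfl, hbc.le⟩ ⟨hbs.le, hs.2.le⟩ hbs

theorem extrema_of_strictAntiOn_strictMonoOn_strictAntiOn {f : ℝ → ℝ} {t₁ t₂ x : ℝ}
    (ht₁ : 0 < t₁) (ht₁₂ : t₁ < t₂) (h₁ : StrictAntiOn f (Ioc 0 t₁))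
    (h₂ : StrictMonoOn f (Icc t₁ t₂)) (h₃ : StrictAntiOn f (Ici t₂))
    (h0 : Tendsto f (𝓝[>] 0) (𝓝 0)) (hx : 0 < x) (hfx : 0 < f x) :
    f t₁ < 0 ∧ (∀ᶠ s in 𝓝[≠] t₁, f t₁ < f s) ∧ 0 < f t₂ ∧ ∀ s > 0, s ≠ t₂ → f s < f t₂ := by
  have hnonpos {s : ℝ} (hs : s ∈ Ioc 0 t₁) : f s ≤ 0 :=
    h₁.antitoneOn.nonpos_of_tendsto_nhdsGT_zero h0 hs
  have hxt₂ : f x ≤ f t₂ := by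
    have ht₁x : t₁ < x := not_le.1 fun hxt₁ => (hnonpos ⟨hx, hxt₁⟩).not_gt hfx
    rcases le_total x t₂ with hxt₂ | ht₂x
    · exact h₂.monotoneOn ⟨ht₁x.le, hxt₂⟩ ⟨ht₁₂.le, le_rfl⟩ hxt₂
    · exact h₃.antitoneOn self_mem_Ici ht₂x ht₂x
  have hft₂ : 0 < f t₂ := hfx.trans_le hxt₂
  refine ⟨?_, eventually_nhdsNE_lt_of_strictAntiOn_of_strictMonoOn ht₁ ht₁₂ h₁ h₂, hft₂,
    fun s hs hst₂ => ?_⟩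
  · exact (h₁ ⟨half_pos ht₁, half_le_self ht₁.le⟩ ⟨ht₁, le_rfl⟩ (half_lt_self ht₁)).trans_le
      (hnonpos ⟨half_pos ht₁, half_le_self ht₁.le⟩)
  · rcases le_or_gt s t₁ with hst₁ | ht₁s
    · exact (hnonpos ⟨hs, hst₁⟩).trans_lt hft₂
    rcases lt_or_gt_of_ne hst₂ with hst₂ | ht₂s
    · exact h₂ ⟨ht₁s.le, hst₂.le⟩ ⟨ht₁₂.le, le_rfl⟩ hst₂
    · exact h₃ self_mem_Ici ht₂s.le ht₂s

noncomputable def gnProfile (b c α β t : ℝ) : ℝ := t ^ 2 / 2 - c * t ^ α - b * t ^ β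

section gnProfile

variable {b c α β t : ℝ}

theorem gnProfile_eq_mul_powDiff (ht : 0 < t) :
    gnProfile b c α β t = t ^ α / 2 * (powDiff (2 - α) (β - α) (2 * b) t - 2 * c) := by
  have h := rpow_mul_powDiff (p := 2 - α) (q := β - α) (K := 2 * b) α ht
  rw [add_sub_cancel, add_sub_cancel, rpow_two] at h
  rw [gnProfile]
  linear_combination -h / 2

theorem gnProfile_pos_iff (ht : 0 < t) :
    0 < gnProfile b c α β t ↔ 2 * c < powDiff (2 - α) (β - α) (2 * b) t := by
  rw [gnProfile_eq_mul_powDiff ht, mul_pos_iff_of_pos_left (by positivity), sub_pos]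

theorem gnProfile_eq_zero_iff (ht : 0 < t) :
    gnProfile b c α β t = 0 ↔ powDiff (2 - α) (β - α) (2 * b) t = 2 * c := by
  rw [gnProfile_eq_mul_powDiff ht, mul_eq_zero_iff_left (by positivity), sub_eq_zero]

theorem hasDerivAt_gnProfile (ht : 0 < t) :
    HasDerivAt (gnProfile b c α β)
      (t ^ (α - 1) * (powDiff (2 - α) (β - α) (b * β) t - c * α)) t := by
  have hderiv := (((hasDerivAt_pow 2 t).div_const 2).sub
    ((hasDerivAt_rpow_const (p := α) (Or.inl ht.ne')).const_mul c)).sub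
    ((hasDerivAt_rpow_const (p := β) (Or.inl ht.ne')).const_mul b)
  refine hderiv.congr_deriv ?_
  have h := rpow_mul_powDiff (p := 2 - α) (q := β - α) (K := b * β) (α - 1) ht
  rw [show α - 1 + (2 - α) = 1 by ring, show α - 1 + (β - α) = β - 1 by ring, rpow_one] at h
  push_cast
  linear_combination -h

theorem tendsto_gnProfile_nhdsGT_zero (hα : 0 < α) (hβ : 0 < β) :
    Tendsto (gnProfile b c α β) (𝓝[>] 0) (𝓝 0) := by
  have hcont : Continuous (gnProfile b c α β) :=
    (((continuous_pow 2).div_const 2).sub (continuous_const.mul (continuous_rpow_const hα.le))).sub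
      (continuous_const.mul (continuous_rpow_const hβ.le))
  have h := hcont.tendsto 0
  rw [gnProfile, zero_rpow hα.ne', zero_rpow hβ.ne'] at h
  norm_num at h
  exact h.mono_left nhdsWithin_le_nhds

end gnProfile

/-- Structure of `h(t) = t²/2 − c t^α − b t^β` (for `b, c > 0`, `0 < α < 2 < β`)
under the condition that the maximum of `φ(t) = (1/2)t^{2−α} − b t^{β−α}` over `(0,∞)`
is strictly greater than `c`: there are `0 < R₀ < R₁` with `h(R₀) = 0 = h(R₁)`,
`h > 0` exactly on `(R₀, R₁)`, `h` has a strict local minimum at negative level in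
`(0, R₀)`, and a strict global maximum (over `(0,∞)`) at positive level in `(R₀, R₁)`. -/
theorem stmt3 (b c α β : ℝ) (hb : 0 < b) (hc : 0 < c)
    (hα0 : 0 < α) (hα2 : α < 2) (hβ : 2 < β)
    (h : ℝ → ℝ)
    (hdef : ∀ t : ℝ, h t = t ^ 2 / 2 - c * t ^ α - b * t ^ β)
    (hmax : ∃ tbar : ℝ, 0 < tbar ∧
      (∀ t : ℝ, 0 < t →
        t ^ (2 - α) / 2 - b * t ^ (β - α) ≤ tbar ^ (2 - α) / 2 - b * tbar ^ (β - α)) ∧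
      c < tbar ^ (2 - α) / 2 - b * tbar ^ (β - α)) :
    ∃ R₀ R₁ : ℝ, 0 < R₀ ∧ R₀ < R₁ ∧ h R₀ = 0 ∧ h R₁ = 0 ∧
      (∀ t : ℝ, 0 < t → (0 < h t ↔ t ∈ Set.Ioo R₀ R₁)) ∧
      (∃ t₁ ∈ Set.Ioo 0 R₀, h t₁ < 0 ∧ ∀ᶠ s in 𝓝[≠] t₁, h t₁ < h s) ∧
      (∃ t₂ ∈ Set.Ioo R₀ R₁, 0 < h t₂ ∧ ∀ s : ℝ, 0 < s → s ≠ t₂ → h s < h t₂) := by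
  obtain rfl : h = gnProfile b c α β := funext hdef
  obtain ⟨tbar, htbar, -, hctbar⟩ := hmax
  have hαβ : 2 - α < β - α := by linarith
  have htbar_pos : 0 < gnProfile b c α β tbar := by
    rw [gnProfile_pos_iff htbar, powDiff]; linarith
  obtain ⟨R₀, R₁, hR⟩ := exists_levelCrossing_powDiff (sub_pos.2 hα2) hαβ (by positivity)
    (by positivity) ⟨tbar, htbar, (gnProfile_pos_iff htbar).1 htbar_pos⟩
  have hsign (t : ℝ) (ht : 0 < t) : 0 < gnProfile b c α β t ↔ t ∈ Ioo R₀ R₁ :=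
    (gnProfile_pos_iff ht).trans (hR.lt_apply_iff ht)
  have hderiv (t : ℝ) (ht : 0 < t) := hasDerivAt_gnProfile (b := b) (c := c) (α := α) (β := β) ht
  have h0 := tendsto_gnProfile_nhdsGT_zero (b := b) (c := c) hα0 (by linarith : 0 < β)
  obtain ⟨s, hs, hderiv_pos⟩ := exists_pos_deriv_of_tendsto_nhdsGT_zero hderiv h0 htbar htbar_pos
  obtain ⟨t₁, t₂, hψ⟩ := exists_levelCrossing_powDiff (sub_pos.2 hα2) hαβ (by positivity)
    (by positivity) ⟨s, hs, sub_pos.1 (pos_of_mul_pos_right hderiv_pos (by positivity))⟩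
  have hw (t : ℝ) (ht : 0 < t) : 0 < t ^ (α - 1) := by positivity
  obtain ⟨ht₁_neg, ht₁_min, ht₂_pos, ht₂_max⟩ :=
    extrema_of_strictAntiOn_strictMonoOn_strictAntiOn hψ.pos hψ.lt
      (hψ.strictAntiOn_Ioc_of_hasDerivAt hderiv hw) (hψ.strictMonoOn_Icc_of_hasDerivAt hderiv hw)
      (hψ.strictAntiOn_Ici_of_hasDerivAt hderiv hw) h0 htbar htbar_pos
  have ht₂ : t₂ ∈ Ioo R₀ R₁ := (hsign t₂ (hψ.pos.trans hψ.lt)).1 ht₂_pos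
  have hR₀ : gnProfile b c α β R₀ = 0 := (gnProfile_eq_zero_iff hR.pos).2 hR.apply_left
  have hR₁ : gnProfile b c α β R₁ = 0 :=
    (gnProfile_eq_zero_iff (hR.pos.trans hR.lt)).2 hR.apply_right
  have ht₁ : t₁ < R₀ := by
    have ht₁R₀ : t₁ ≤ R₀ := not_lt.1 fun hRt₁ =>
      ht₁_neg.not_gt ((hsign t₁ hψ.pos).2 ⟨hRt₁, hψ.lt.trans ht₂.2⟩)
    exact ht₁R₀.lt_of_ne (by rintro rfl; exact ht₁_neg.ne hR₀)
  exact ⟨R₀, R₁, hR.pos, hR.lt, hR₀, hR₁, hsign, ⟨t₁, ⟨hψ.pos, ht₁⟩, ht₁_neg, ht₁_min⟩,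
    ⟨t₂, ht₂, ht₂_pos, ht₂_max⟩⟩
end

section
/- Let A, B > 0 and 0 < α < 2 < β. Define Ψ : ℝ → ℝ by Ψ(s) = A e^{2s}/2 − B e^{βs}/β + C e^{αs}/α with C < 0 (defocusing case μ < 0, C = μ|u|_q^q factor absorbed). Then Ψ(s) → 0⁺ as s → −∞, Ψ(s) → −∞ as s → +∞, Ψ has a unique critical point t₀ ∈ ℝ, and t₀ is a strict global maximum of Ψ with Ψ(t₀) > 0. Moreover Ψ is strictly decreasing on (t₀, ∞), and Ψ'(0) < 0 implies t₀ < 0. -/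
open Real Filter Topology Set

/-!
Writing `Ψ'(s) = e^{2s} h(s)` with `h(s) = A - B e^{(β-2)s} - C e^{(α-2)s}`, both exponential
terms of `h` are strictly decreasing because `β > 2 > α` and `B > 0 > C`, and `h` runs from `+∞`
to `-∞`. So `h` has exactly one zero `t₀`, `Ψ` increases before it and decreases after it.
Since `Ψ → 0` at `-∞`, the increase on `(-∞, t₀]` makes `Ψ` positive there; at `+∞` the term
`-B e^{βs}/β` dominates.
-/

section DerivSignChange

variable {f g h : ℝ → ℝ} {t₀ : ℝ}

theorem deriv_eq_zero_iff_of_hasDerivAt_mul (hf : ∀ s, HasDerivAt f (g s * h s) s)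
    (hg : ∀ s, 0 < g s) (hh : StrictAnti h) (ht₀ : h t₀ = 0) (s : ℝ) :
    deriv f s = 0 ↔ s = t₀ := by
  rw [(hf s).deriv, mul_eq_zero, or_iff_right (hg s).ne', ← ht₀, hh.injective.eq_iff]

theorem lt_of_deriv_neg_of_hasDerivAt_mul (hf : ∀ s, HasDerivAt f (g s * h s) s)
    (hg : ∀ s, 0 < g s) (hh : StrictAnti h) (ht₀ : h t₀ = 0) {s : ℝ} (hs : deriv f s < 0) :
    t₀ < s := by
  rw [(hf s).deriv] at hs
  exact hh.lt_iff_gt.mp (ht₀ ▸ neg_of_mul_neg_right hs (hg s).le)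

theorem strictMonoOn_Iic_of_hasDerivAt_mul (hf : ∀ s, HasDerivAt f (g s * h s) s)
    (hg : ∀ s, 0 < g s) (hh : StrictAnti h) (ht₀ : h t₀ = 0) : StrictMonoOn f (Iic t₀) := by
  refine strictMonoOn_of_deriv_pos (convex_Iic t₀)
    (continuous_iff_continuousAt.2 fun s => (hf s).continuousAt).continuousOn fun s hs => ?_
  rw [interior_Iic] at hs
  rw [(hf s).deriv]
  exact mul_pos (hg s) (ht₀ ▸ hh hs)

theorem strictAntiOn_Ici_of_hasDerivAt_mul (hf : ∀ s, HasDerivAt f (g s * h s) s)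
    (hg : ∀ s, 0 < g s) (hh : StrictAnti h) (ht₀ : h t₀ = 0) : StrictAntiOn f (Ici t₀) := by
  refine strictAntiOn_of_deriv_neg (convex_Ici t₀)
    (continuous_iff_continuousAt.2 fun s => (hf s).continuousAt).continuousOn fun s hs => ?_
  rw [interior_Ici] at hs
  rw [(hf s).deriv]
  exact mul_neg_of_pos_of_neg (hg s) (ht₀ ▸ hh hs)

end DerivSignChange

theorem StrictMonoOn.lt_of_tendsto_atBot {f : ℝ → ℝ} {t a s : ℝ} (hf : StrictMonoOn f (Iic t))
    (hlim : Tendsto f atBot (𝓝 a)) (hs : s ≤ t) : a < f s := by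
  have hs' : s - 1 ≤ t := by linarith
  have ha : a ≤ f (s - 1) := le_of_tendsto hlim <| by
    filter_upwards [eventually_le_atBot (s - 1)] with c hc
    exact hf.monotoneOn (hc.trans hs') hs' hc
  exact ha.trans_lt (hf hs' hs (by linarith))

theorem tendsto_exp_const_mul_atBot_nhds_zero {c : ℝ} (hc : 0 < c) :
    Tendsto (fun s => exp (c * s)) atBot (𝓝 0) :=
  tendsto_exp_comp_nhds_zero.2 (tendsto_id.const_mul_atBot hc)

theorem tendsto_exp_const_mul_atTop_nhds_zero {c : ℝ} (hc : c < 0) :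
    Tendsto (fun s => exp (c * s)) atTop (𝓝 0) :=
  tendsto_exp_comp_nhds_zero.2 ((tendsto_const_mul_atBot_of_neg hc).2 tendsto_id)

noncomputable section FiberMap

variable (A B C α β : ℝ)

def fiberMap (s : ℝ) : ℝ :=
  A * exp (2 * s) / 2 - B * exp (β * s) / β - C * exp (α * s) / α

def fiberDerivRatio (s : ℝ) : ℝ :=
  A - B * exp ((β - 2) * s) - C * exp ((α - 2) * s)

variable {A B C α β}

theorem hasDerivAt_fiberMap (hα : α ≠ 0) (hβ : β ≠ 0) (s : ℝ) :
    HasDerivAt (fiberMap A B C α β) (exp (2 * s) * fiberDerivRatio A B C α β s) s := by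
  have hexp (c : ℝ) : HasDerivAt (fun s => exp (c * s)) (exp (c * s) * c) s := by
    simpa using ((hasDerivAt_id s).const_mul c).exp
  refine (((hexp 2).const_mul A |>.div_const 2).sub ((hexp β).const_mul B |>.div_const β)).sub
    ((hexp α).const_mul C |>.div_const α) |>.congr_deriv ?_
  rw [fiberDerivRatio, show β * s = 2 * s + (β - 2) * s by ring,
    show α * s = 2 * s + (α - 2) * s by ring, exp_add, exp_add]
  field_simp

theorem strictAnti_fiberDerivRatio (hB : 0 < B) (hC : C < 0) (hα : α < 2) (hβ : 2 < β) :
    StrictAnti (fiberDerivRatio A B C α β) := by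
  intro a b hab
  have hβexp : exp ((β - 2) * a) < exp ((β - 2) * b) :=
    exp_lt_exp.2 (mul_lt_mul_of_pos_left hab (by linarith))
  have hαexp : exp ((α - 2) * b) < exp ((α - 2) * a) :=
    exp_lt_exp.2 (mul_lt_mul_of_neg_left hab (by linarith))
  simp only [fiberDerivRatio]
  nlinarith

theorem tendsto_fiberDerivRatio_atBot (hC : C < 0) (hα : α < 2) (hβ : 2 < β) :
    Tendsto (fiberDerivRatio A B C α β) atBot atTop := by
  have hβexp := (tendsto_exp_const_mul_atBot_nhds_zero (sub_pos.2 hβ)).const_mul B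
  have hαexp : Tendsto (fun s => -C * exp ((α - 2) * s)) atBot atTop :=
    (tendsto_exp_comp_atTop.2 ((tendsto_const_mul_atTop_of_neg (sub_neg.2 hα)).2
      tendsto_id)).const_mul_atTop (neg_pos.2 hC)
  refine ((tendsto_const_nhds (x := A)).sub hβexp |>.add_atTop hαexp).congr fun s => ?_
  simp only [fiberDerivRatio]
  ring

theorem tendsto_fiberDerivRatio_atTop (hB : 0 < B) (hα : α < 2) (hβ : 2 < β) :
    Tendsto (fiberDerivRatio A B C α β) atTop atBot := by
  have hαexp := (tendsto_exp_const_mul_atTop_nhds_zero (sub_neg.2 hα)).const_mul C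
  have hβexp : Tendsto (fun s => -(B * exp ((β - 2) * s))) atTop atBot :=
    tendsto_neg_atBot_iff.2 ((tendsto_exp_comp_atTop.2
      (tendsto_id.const_mul_atTop (sub_pos.2 hβ))).const_mul_atTop hB)
  refine ((tendsto_const_nhds (x := A)).sub hαexp |>.add_atBot hβexp).congr fun s => ?_
  simp only [fiberDerivRatio]
  ring

theorem exists_fiberDerivRatio_eq_zero (hB : 0 < B) (hC : C < 0) (hα : α < 2) (hβ : 2 < β) :
    ∃ t₀, fiberDerivRatio A B C α β t₀ = 0 :=
  Continuous.surjective' (by unfold fiberDerivRatio; fun_prop)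
    (tendsto_fiberDerivRatio_atBot hC hα hβ) (tendsto_fiberDerivRatio_atTop hB hα hβ) 0

theorem tendsto_fiberMap_atBot (hα : 0 < α) (hβ : 0 < β) :
    Tendsto (fiberMap A B C α β) atBot (𝓝 0) := by
  rw [show (0 : ℝ) = A * 0 / 2 - B * 0 / β - C * 0 / α by ring]
  exact ((tendsto_exp_const_mul_atBot_nhds_zero two_pos).const_mul A |>.div_const 2).sub
    ((tendsto_exp_const_mul_atBot_nhds_zero hβ).const_mul B |>.div_const β) |>.sub
    ((tendsto_exp_const_mul_atBot_nhds_zero hα).const_mul C |>.div_const α)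

theorem tendsto_fiberMap_atTop (hB : 0 < B) (hα : α < 2) (hβ : 2 < β) :
    Tendsto (fiberMap A B C α β) atTop atBot := by
  have hβ0 : 0 < β := by linarith
  have hbracket : Tendsto (fun s => A * exp ((2 - β) * s) / 2 - B / β
      - C * exp ((α - β) * s) / α) atTop (𝓝 (A * 0 / 2 - B / β - C * 0 / α)) :=
    ((tendsto_exp_const_mul_atTop_nhds_zero (by linarith)).const_mul A |>.div_const 2).sub
      tendsto_const_nhds |>.sub
      ((tendsto_exp_const_mul_atTop_nhds_zero (by linarith)).const_mul C |>.div_const α)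
  have hlimit : A * 0 / 2 - B / β - C * 0 / α < 0 := by
    have : 0 < B / β := div_pos hB hβ0
    linarith [show A * 0 / 2 - B / β - C * 0 / α = -(B / β) by ring]
  refine ((tendsto_exp_comp_atTop.2 (tendsto_id.const_mul_atTop hβ0)).atTop_mul_neg hlimit
    hbracket).congr fun s => ?_
  rw [fiberMap, id, show 2 * s = β * s + (2 - β) * s by ring,
    show α * s = β * s + (α - β) * s by ring, exp_add, exp_add]
  ring

end FiberMap

theorem stmt4_general (A B C α β : ℝ) (hB : 0 < B) (hC : C < 0)
    (hα0 : 0 < α) (hα2 : α < 2) (hβ : 2 < β)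
    (Ψ : ℝ → ℝ)
    (hΨ : ∀ s, Ψ s = A * Real.exp (2 * s) / 2 - B * Real.exp (β * s) / β
      - C * Real.exp (α * s) / α) :
    Tendsto Ψ atBot (𝓝 0) ∧ (∀ᶠ s in atBot, 0 < Ψ s) ∧
    Tendsto Ψ atTop atBot ∧
    ∃ t₀ : ℝ, (∀ s : ℝ, deriv Ψ s = 0 ↔ s = t₀) ∧
      0 < Ψ t₀ ∧ (∀ s : ℝ, s ≠ t₀ → Ψ s < Ψ t₀) ∧
      StrictAntiOn Ψ (Set.Ioi t₀) ∧
      (deriv Ψ 0 < 0 → t₀ < 0) := by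
  obtain rfl : Ψ = fiberMap A B C α β := funext hΨ
  have hβ0 : 0 < β := by linarith
  have hderiv := hasDerivAt_fiberMap (A := A) (B := B) (C := C) hα0.ne' hβ0.ne'
  have hratio := strictAnti_fiberDerivRatio (A := A) hB hC hα2 hβ
  obtain ⟨t₀, ht₀⟩ := exists_fiberDerivRatio_eq_zero (A := A) hB hC hα2 hβ
  have hexp (s : ℝ) : 0 < exp (2 * s) := exp_pos _
  have hzero := tendsto_fiberMap_atBot (A := A) (B := B) (C := C) hα0 hβ0
  have hmono := strictMonoOn_Iic_of_hasDerivAt_mul hderiv hexp hratio ht₀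
  have hanti := strictAntiOn_Ici_of_hasDerivAt_mul hderiv hexp hratio ht₀
  refine ⟨hzero, ?_, tendsto_fiberMap_atTop hB hα2 hβ, t₀,
    deriv_eq_zero_iff_of_hasDerivAt_mul hderiv hexp hratio ht₀,
    hmono.lt_of_tendsto_atBot hzero le_rfl, fun s hs => ?_, hanti.mono Ioi_subset_Ici_self,
    lt_of_deriv_neg_of_hasDerivAt_mul hderiv hexp hratio ht₀⟩
  · filter_upwards [eventually_le_atBot t₀] with s hs using hmono.lt_of_tendsto_atBot hzero hs
  · rcases hs.lt_or_gt with hlt | hgt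
    · exact hmono hlt.le self_mem_Iic hlt
    · exact hanti self_mem_Ici hgt.le hgt

/-- Defocusing fiber map (Lemma 7.2): for `A, B > 0`, `C < 0` (here `C = μ|u|_q^q`
with `μ < 0`, appearing with the minus sign of the fiber map), `0 < α < 2 < β`, the map
`Ψ(s) = A e^{2s}/2 − (B/β) e^{βs} − (C/α) e^{αs}` satisfies: `Ψ(s) → 0⁺` as `s → −∞`,
`Ψ(s) → −∞` as `s → +∞`, `Ψ` has a unique critical point `t₀`, which is a strict global
maximum with `Ψ(t₀) > 0`; moreover `Ψ` is strictly decreasing on `(t₀, ∞)`, and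
`Ψ'(0) < 0` implies `t₀ < 0`. -/
theorem stmt4 (A B C α β : ℝ) (hA : 0 < A) (hB : 0 < B) (hC : C < 0)
    (hα0 : 0 < α) (hα2 : α < 2) (hβ : 2 < β)
    (Ψ : ℝ → ℝ)
    (hΨ : ∀ s, Ψ s = A * Real.exp (2 * s) / 2 - B * Real.exp (β * s) / β
      - C * Real.exp (α * s) / α) :
    Tendsto Ψ atBot (𝓝 0) ∧ (∀ᶠ s in atBot, 0 < Ψ s) ∧
    Tendsto Ψ atTop atBot ∧
    ∃ t₀ : ℝ, (∀ s : ℝ, deriv Ψ s = 0 ↔ s = t₀) ∧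
      0 < Ψ t₀ ∧ (∀ s : ℝ, s ≠ t₀ → Ψ s < Ψ t₀) ∧
      StrictAntiOn Ψ (Set.Ioi t₀) ∧
      (deriv Ψ 0 < 0 → t₀ < 0) :=
  stmt4_general A B C α β hB hC hα0 hα2 hβ Ψ hΨ
end

section
/- Let A, B, C > 0 and 0 < α < 2 < β. Define Ψ(s) = (A/2)e^{2s} − (B/β)e^{βs} − (C/α)e^{αs}. Suppose there exist r₀ < r₁ in ℝ with Ψ > 0 on (r₀, r₁). Then Ψ has exactly two critical points s₀ < t₀: s₀ is a local minimum with Ψ(s₀) < 0 and s₀ < r₀, and t₀ is the global maximum with Ψ(t₀) > 0. Moreover Ψ has exactly two zeros c < d with s₀ < c < t₀ < d, and Ψ is strictly decreasing and concave on (t₀, ∞). -/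
open Real Filter Topology Set

lemma stmt8_expD (c s : ℝ) : HasDerivAt (fun x => Real.exp (c*x)) (c * Real.exp (c*s)) s := by
  have h := ((hasDerivAt_id s).const_mul c).exp
  refine h.congr_deriv ?_
  simp only [id, mul_one]; ring

lemma stmt8_psiD (A B C α β : ℝ) (hα : α ≠ 0) (hβ : β ≠ 0) (s : ℝ) :
    HasDerivAt (fun x => A/2*Real.exp (2*x) - B/β*Real.exp (β*x) - C/α*Real.exp (α*x))
      (A*Real.exp (2*s) - B*Real.exp (β*s) - C*Real.exp (α*s)) s := by
  have h := (((stmt8_expD 2 s).const_mul (A/2)).sub ((stmt8_expD β s).const_mul (B/β))).sub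
    ((stmt8_expD α s).const_mul (C/α))
  refine h.congr_deriv ?_
  field_simp

lemma stmt8_phiD (A B C a b : ℝ) (s : ℝ) :
    HasDerivAt (fun x => A*Real.exp (a*x) - B*Real.exp (b*x) - C)
      (a*A*Real.exp (a*s) - b*B*Real.exp (b*s)) s := by
  have h := (((stmt8_expD a s).const_mul A).sub ((stmt8_expD b s).const_mul B)).sub
    (hasDerivAt_const s C)
  refine h.congr_deriv ?_
  ring

set_option maxHeartbeats 2000000
/-- Abstract fiber-map lemma (Lemma 5.4): let `A, B, C > 0`, `0 < α < 2 < β`, and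
`Ψ(s) = (A/2)e^{2s} − (B/β)e^{βs} − (C/α)e^{αs}`.  If `Ψ > 0` on some nonempty open
interval `(r₀, r₁)`, then `Ψ` has exactly two critical points `s₀ < t₀`: `s₀` is a local
minimum with `Ψ(s₀) < 0` and `s₀ < r₀`, while `t₀` is the strict global maximum with
`Ψ(t₀) > 0`.  Moreover `Ψ` has exactly two zeros `c < d` with `s₀ < c < t₀ < d`, and
`Ψ` is strictly decreasing and concave on `(t₀, ∞)`. -/
theorem stmt8 (A B C α β : ℝ) (hA : 0 < A) (hB : 0 < B) (hC : 0 < C)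
    (hα0 : 0 < α) (hα2 : α < 2) (hβ : 2 < β)
    (Ψ : ℝ → ℝ)
    (hΨ : ∀ s, Ψ s = A / 2 * Real.exp (2 * s) - B / β * Real.exp (β * s)
      - C / α * Real.exp (α * s))
    (r₀ r₁ : ℝ) (hr : r₀ < r₁)
    (hpos : ∀ s ∈ Set.Ioo r₀ r₁, 0 < Ψ s) :
    ∃ s₀ t₀ : ℝ, s₀ < t₀ ∧
      (∀ s : ℝ, deriv Ψ s = 0 ↔ s = s₀ ∨ s = t₀) ∧
      IsLocalMin Ψ s₀ ∧ Ψ s₀ < 0 ∧ s₀ < r₀ ∧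
      0 < Ψ t₀ ∧ (∀ s : ℝ, s ≠ t₀ → Ψ s < Ψ t₀) ∧
      (∃ c d : ℝ, s₀ < c ∧ c < t₀ ∧ t₀ < d ∧ (∀ s : ℝ, Ψ s = 0 ↔ s = c ∨ s = d)) ∧
      StrictAntiOn Ψ (Set.Ioi t₀) ∧ ConcaveOn ℝ (Set.Ioi t₀) Ψ := by
  have hΨfun : Ψ = fun s => A / 2 * Real.exp (2 * s) - B / β * Real.exp (β * s)
      - C / α * Real.exp (α * s) := funext hΨ
  subst hΨfun
  set Ψ : ℝ → ℝ := fun s => A / 2 * Real.exp (2 * s) - B / β * Real.exp (β * s)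
      - C / α * Real.exp (α * s) with hΨdef
  clear_value Ψ
  clear hΨ
  have hb2 : (0:ℝ) < β - 2 := by linarith
  have ha : (0:ℝ) < 2 - α := by linarith
  have hba : (0:ℝ) < β - α := by linarith
  have hβ0 : (0:ℝ) < β := by linarith
  set Φ : ℝ → ℝ := fun s => A * Real.exp ((2-α)*s) - B * Real.exp ((β-α)*s) - C with hΦ
  set sstar : ℝ := Real.log ((2-α)*A/((β-α)*B)) / (β-2) with hsstar
  clear_value Φ sstar
  -- basic derivative facts
  have hΨD : ∀ s : ℝ, HasDerivAt Ψ
      (A*Real.exp (2*s) - B*Real.exp (β*s) - C*Real.exp (α*s)) s := by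
    rw [hΨdef]; exact fun s => stmt8_psiD A B C α β (ne_of_gt hα0) (ne_of_gt hβ0) s
  have hΦD : ∀ s : ℝ, HasDerivAt Φ
      ((2-α)*A*Real.exp ((2-α)*s) - (β-α)*B*Real.exp ((β-α)*s)) s := by
    rw [hΦ]; exact fun s => stmt8_phiD A B C (2-α) (β-α) s
  have contΨ : Continuous Ψ := by rw [hΨdef]; fun_prop
  have contΦ : Continuous Φ := by rw [hΦ]; fun_prop
  have diffΨ : Differentiable ℝ Ψ := fun s => (hΨD s).differentiableAt
  -- exponential splittings
  have hsplitb : ∀ s : ℝ, Real.exp ((β-α)*s) = Real.exp ((2-α)*s) * Real.exp ((β-2)*s) := by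
    intro s; rw [← Real.exp_add]; ring_nf
  have hsplit2 : ∀ s : ℝ, Real.exp (2*s) = Real.exp (α*s) * Real.exp ((2-α)*s) := by
    intro s; rw [← Real.exp_add]; ring_nf
  have hsplitβ : ∀ s : ℝ, Real.exp (β*s) = Real.exp (α*s) * Real.exp ((β-α)*s) := by
    intro s; rw [← Real.exp_add]; ring_nf
  have hsplitβ2 : ∀ s : ℝ, Real.exp (β*s) = Real.exp (2*s) * Real.exp ((β-2)*s) := by
    intro s; rw [← Real.exp_add]; ring_nf
  -- deriv Ψ = exp(αs) * Φ
  have hdp : ∀ s : ℝ, deriv Ψ s = Real.exp (α*s) * Φ s := by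
    intro s
    rw [(hΨD s).deriv, hΦ, hsplit2 s, hsplitβ s]
    ring
  -- the iff for the sign of Φ'
  have hiff : ∀ s : ℝ, ((β-α)*B*Real.exp ((β-2)*s) < (2-α)*A) ↔ s < sstar := by
    intro s
    rw [show (β-α)*B*Real.exp ((β-2)*s) = Real.exp ((β-2)*s) * ((β-α)*B) by ring,
      ← lt_div_iff₀ (by positivity), ← Real.lt_log_iff_exp_lt (by positivity),
      hsstar, lt_div_iff₀ hb2, mul_comm]
  have hiff2 : ∀ s : ℝ, ((2-α)*A < (β-α)*B*Real.exp ((β-2)*s)) ↔ sstar < s := by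
    intro s
    rw [show (β-α)*B*Real.exp ((β-2)*s) = Real.exp ((β-2)*s) * ((β-α)*B) by ring,
      ← div_lt_iff₀ (by positivity), ← Real.log_lt_iff_lt_exp (by positivity),
      hsstar, div_lt_iff₀ hb2, mul_comm s (β-2)]
  -- Φ strictly monotone on (-∞, sstar], strictly antitone on [sstar, ∞)
  have monoΦ : StrictMonoOn Φ (Iic sstar) := by
    apply strictMonoOn_of_deriv_pos (convex_Iic _) contΦ.continuousOn
    intro x hx
    rw [interior_Iic] at hx
    rw [(hΦD x).deriv, show (2-α)*A*Real.exp ((2-α)*x) - (β-α)*B*Real.exp ((β-α)*x)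
      = Real.exp ((2-α)*x) * ((2-α)*A - (β-α)*B*Real.exp ((β-2)*x)) by rw [hsplitb x]; ring]
    have := (hiff x).2 hx
    have he := Real.exp_pos ((2-α)*x)
    nlinarith
  have antiΦ : StrictAntiOn Φ (Ici sstar) := by
    apply strictAntiOn_of_deriv_neg (convex_Ici _) contΦ.continuousOn
    intro x hx
    rw [interior_Ici] at hx
    rw [(hΦD x).deriv, show (2-α)*A*Real.exp ((2-α)*x) - (β-α)*B*Real.exp ((β-α)*x)
      = Real.exp ((2-α)*x) * ((2-α)*A - (β-α)*B*Real.exp ((β-2)*x)) by rw [hsplitb x]; ring]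
    have h2 : (2-α)*A < (β-α)*B*Real.exp ((β-2)*x) := (hiff2 x).2 hx
    have he := Real.exp_pos ((2-α)*x)
    nlinarith
  -- smallness/largeness negativity lemmas
  have hΦsmall : ∀ s : ℝ, (2-α)*s ≤ Real.log (C/A) → Φ s < 0 := by
    intro s hs
    have h1 : Real.exp ((2-α)*s) ≤ C/A := by
      rw [← Real.exp_log (show (0:ℝ) < C/A by positivity)]
      exact Real.exp_le_exp.2 hs
    have h2 : A * Real.exp ((2-α)*s) ≤ C := by
      rw [le_div_iff₀ hA] at h1; linarith [h1]
    have := Real.exp_pos ((β-α)*s)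
    rw [hΦ]; simp only
    nlinarith
  have hΦlarge : ∀ s : ℝ, Real.log (A/B) ≤ (β-2)*s → Φ s < 0 := by
    intro s hs
    have h1 : A/B ≤ Real.exp ((β-2)*s) := by
      rw [← Real.exp_log (show (0:ℝ) < A/B by positivity)]
      exact Real.exp_le_exp.2 hs
    have h2 : A ≤ B * Real.exp ((β-2)*s) := by
      rw [div_le_iff₀ hB] at h1; linarith
    have he := Real.exp_pos ((2-α)*s)
    rw [hΦ]; simp only [hsplitb s]
    nlinarith
  have hΨsmall : ∀ s : ℝ, (2-α)*s ≤ Real.log (2*C/(α*A)) → Ψ s < 0 := by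
    intro s hs
    have h1 : Real.exp ((2-α)*s) ≤ 2*C/(α*A) := by
      rw [← Real.exp_log (show (0:ℝ) < 2*C/(α*A) by positivity)]
      exact Real.exp_le_exp.2 hs
    have h2 : A/2 * Real.exp ((2-α)*s) ≤ C/α := by
      rw [le_div_iff₀ (by positivity)] at h1
      rw [div_mul_eq_mul_div, div_le_div_iff₀ two_pos hα0]
      nlinarith
    have he := Real.exp_pos (α*s)
    have hbb : 0 < B/β * Real.exp (β*s) := by positivity
    rw [hΨdef]; simp only [hsplit2 s]
    nlinarith
  have hΨlarge : ∀ s : ℝ, Real.log (β*A/(2*B)) ≤ (β-2)*s → Ψ s < 0 := by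
    intro s hs
    have h1 : β*A/(2*B) ≤ Real.exp ((β-2)*s) := by
      rw [← Real.exp_log (show (0:ℝ) < β*A/(2*B) by positivity)]
      exact Real.exp_le_exp.2 hs
    have h2 : A/2 ≤ B/β * Real.exp ((β-2)*s) := by
      rw [div_le_iff₀ (by positivity)] at h1
      rw [div_mul_eq_mul_div, div_le_div_iff₀ two_pos hβ0]
      nlinarith
    have he := Real.exp_pos (2*s)
    have hcc : 0 < C/α * Real.exp (α*s) := by positivity
    rw [hΨdef]; simp only [hsplitβ2 s]
    nlinarith
  -- Ψ is positive at the midpoint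
  set m : ℝ := (r₀ + r₁)/2 with hm
  have hmmem : m ∈ Set.Ioo r₀ r₁ := ⟨by rw [hm]; linarith, by rw [hm]; linarith⟩
  have hΨm : 0 < Ψ m := hpos m hmmem
  -- Φ sstar > 0 via MVT
  have hΦstarmax : ∀ x : ℝ, Φ x ≤ Φ sstar := by
    intro x
    rcases lt_trichotomy x sstar with h | h | h
    · exact (monoΦ (mem_Iic.2 h.le) self_mem_Iic h).le
    · rw [h]
    · exact (antiΦ self_mem_Ici (mem_Ici.2 h.le) h).le
  have hΦstar : 0 < Φ sstar := by
    set w : ℝ := min (Real.log (2*C/(α*A)) / (2-α)) (m - 1) with hw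
    have hΨw : Ψ w < 0 := by
      apply hΨsmall
      have : w ≤ Real.log (2*C/(α*A)) / (2-α) := min_le_left _ _
      rw [le_div_iff₀ ha] at this; linarith
    have hwm : w < m := lt_of_le_of_lt (min_le_right _ _) (by linarith)
    obtain ⟨x, hx, hdx⟩ := exists_deriv_eq_slope Ψ hwm contΨ.continuousOn
      diffΨ.differentiableOn
    have hslope : 0 < deriv Ψ x := by
      rw [hdx]
      apply div_pos (by linarith) (by linarith)
    rw [hdp x] at hslope
    have hΦx : 0 < Φ x := by
      have := Real.exp_pos (α*x); nlinarith
    exact lt_of_lt_of_le hΦx (hΦstarmax x)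
  -- the two critical points
  obtain ⟨s₀, hs₀mem, hΦs₀⟩ : ∃ s₀ ∈ Ioo (min (Real.log (C/A)/(2-α)) (sstar-1)) sstar, Φ s₀ = 0 := by
    set u := min (Real.log (C/A)/(2-α)) (sstar-1) with hu
    have hu1 : u < sstar := lt_of_le_of_lt (min_le_right _ _) (by linarith)
    have hΦu : Φ u < 0 := by
      apply hΦsmall
      have : u ≤ Real.log (C/A)/(2-α) := min_le_left _ _
      rw [le_div_iff₀ ha] at this; linarith
    have := intermediate_value_Ioo hu1.le contΦ.continuousOn
    obtain ⟨s₀, h1, h2⟩ := this ⟨hΦu, hΦstar⟩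
    exact ⟨s₀, h1, h2⟩
  obtain ⟨t₀, ht₀mem, hΦt₀⟩ : ∃ t₀ ∈ Ioo sstar (max (Real.log (A/B)/(β-2)) (sstar+1)), Φ t₀ = 0 := by
    set v := max (Real.log (A/B)/(β-2)) (sstar+1) with hv
    have hv1 : sstar < v := lt_of_lt_of_le (by linarith) (le_max_right _ _)
    have hΦv : Φ v < 0 := by
      apply hΦlarge
      have : Real.log (A/B)/(β-2) ≤ v := le_max_left _ _
      rw [div_le_iff₀ hb2] at this; linarith
    have := intermediate_value_Ioo' hv1.le contΦ.continuousOn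
    obtain ⟨t₀, h1, h2⟩ := this ⟨hΦv, hΦstar⟩
    exact ⟨t₀, h1, h2⟩
  have hs₀star : s₀ < sstar := hs₀mem.2
  have hstart₀ : sstar < t₀ := ht₀mem.1
  have hst : s₀ < t₀ := hs₀star.trans hstart₀
  -- sign of Φ
  have hΦneg1 : ∀ s, s < s₀ → Φ s < 0 := by
    intro s hs
    have := monoΦ (le_of_lt (hs.trans hs₀star)) hs₀star.le hs
    rw [hΦs₀] at this; exact this
  have hΦpos2 : ∀ s, s₀ < s → s < t₀ → 0 < Φ s := by
    intro s h1 h2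
    rcases le_or_gt s sstar with h | h
    · have := monoΦ hs₀star.le h h1
      rw [hΦs₀] at this; exact this
    · have h3 := antiΦ (mem_Ici.2 h.le) (mem_Ici.2 hstart₀.le) h2
      rw [hΦt₀] at h3; exact h3
  have hΦneg3 : ∀ s, t₀ < s → Φ s < 0 := by
    intro s hs
    have := antiΦ hstart₀.le (hstart₀.le.trans hs.le) hs
    rw [hΦt₀] at this; exact this
  -- monotonicity of Ψ
  have antiΨ1 : StrictAntiOn Ψ (Iic s₀) := by
    apply strictAntiOn_of_deriv_neg (convex_Iic _) contΨ.continuousOn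
    intro x hx
    rw [interior_Iic] at hx
    rw [hdp x]
    exact mul_neg_of_pos_of_neg (Real.exp_pos _) (hΦneg1 x hx)
  have monoΨ : StrictMonoOn Ψ (Icc s₀ t₀) := by
    apply strictMonoOn_of_deriv_pos (convex_Icc _ _) contΨ.continuousOn
    intro x hx
    rw [interior_Icc] at hx
    rw [hdp x]
    exact mul_pos (Real.exp_pos _) (hΦpos2 x hx.1 hx.2)
  have antiΨ2 : StrictAntiOn Ψ (Ici t₀) := by
    apply strictAntiOn_of_deriv_neg (convex_Ici _) contΨ.continuousOn
    intro x hx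
    rw [interior_Ici] at hx
    rw [hdp x]
    exact mul_neg_of_pos_of_neg (Real.exp_pos _) (hΦneg3 x hx)
  -- Ψ negative on (-∞, s₀]
  have hΨnegIic : ∀ s, s ≤ s₀ → Ψ s < 0 := by
    intro s hs
    set w : ℝ := min (Real.log (2*C/(α*A)) / (2-α)) (s - 1) with hw
    have hΨw : Ψ w < 0 := by
      apply hΨsmall
      have : w ≤ Real.log (2*C/(α*A)) / (2-α) := min_le_left _ _
      rw [le_div_iff₀ ha] at this; linarith
    have hws : w < s := lt_of_le_of_lt (min_le_right _ _) (by linarith)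
    have := antiΨ1 (mem_Iic.2 (hws.trans_le hs).le) (mem_Iic.2 hs) hws
    linarith
  have hΨs₀ : Ψ s₀ < 0 := hΨnegIic s₀ le_rfl
  -- Ψ t₀ > 0
  have hΨt₀ : 0 < Ψ t₀ := by
    rcases lt_trichotomy m t₀ with h | h | h
    · have hms₀ : s₀ < m := by
        by_contra hc
        push_neg at hc
        exact absurd hΨm (not_lt.2 (hΨnegIic m hc).le)
      have := monoΨ ⟨hms₀.le, h.le⟩ (right_mem_Icc.2 hst.le) h
      linarith
    · rw [← h]; exact hΨm
    · have := antiΨ2 self_mem_Ici (mem_Ici.2 h.le) h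
      linarith
  -- critical points characterization
  have hcrit : ∀ s : ℝ, deriv Ψ s = 0 ↔ s = s₀ ∨ s = t₀ := by
    intro s
    constructor
    · intro h
      rw [hdp s] at h
      have hΦz : Φ s = 0 := by
        have := Real.exp_pos (α*s)
        rcases mul_eq_zero.1 h with h' | h'
        · exact absurd h' (ne_of_gt this)
        · exact h'
      rcases lt_trichotomy s sstar with h1 | h1 | h1
      · left
        exact monoΦ.injOn h1.le hs₀star.le (by rw [hΦz, hΦs₀])
      · exfalso; rw [h1] at hΦz; rw [hΦz] at hΦstar; exact lt_irrefl 0 hΦstar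
      · right
        exact antiΦ.injOn h1.le hstart₀.le (by rw [hΦz, hΦt₀])
    · rintro (rfl | rfl) <;> rw [hdp] <;> simp [hΦs₀, hΦt₀]
  -- local min
  have hlocmin : IsLocalMin Ψ s₀ := by
    have hmem : Iio t₀ ∈ 𝓝 s₀ := Iio_mem_nhds hst
    refine Filter.eventually_of_mem hmem ?_
    intro s hs
    rcases lt_trichotomy s s₀ with h | h | h
    · exact (antiΨ1 (mem_Iic.2 h.le) self_mem_Iic h).le
    · rw [h]
    · exact (monoΨ (left_mem_Icc.2 hst.le) ⟨h.le, le_of_lt hs⟩ h).le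
  -- global max
  have hglobmax : ∀ s : ℝ, s ≠ t₀ → Ψ s < Ψ t₀ := by
    intro s hs
    rcases le_or_gt s s₀ with h | h
    · exact lt_trans (hΨnegIic s h) hΨt₀
    · rcases lt_trichotomy s t₀ with h2 | h2 | h2
      · exact monoΨ ⟨h.le, h2.le⟩ (right_mem_Icc.2 hst.le) h2
      · exact absurd h2 hs
      · exact antiΨ2 self_mem_Ici (mem_Ici.2 h2.le) h2
  -- the two zeros
  obtain ⟨c, hcmem, hΨc⟩ : ∃ c ∈ Ioo s₀ t₀, Ψ c = 0 := by
    have := intermediate_value_Ioo hst.le contΨ.continuousOn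
    obtain ⟨c, h1, h2⟩ := this ⟨hΨs₀, hΨt₀⟩
    exact ⟨c, h1, h2⟩
  obtain ⟨d, hdmem, hΨd⟩ : ∃ d ∈ Ioo t₀ (max (Real.log (β*A/(2*B))/(β-2)) (t₀+1)), Ψ d = 0 := by
    set V := max (Real.log (β*A/(2*B))/(β-2)) (t₀+1) with hV
    have hV1 : t₀ < V := lt_of_lt_of_le (by linarith) (le_max_right _ _)
    have hΨV : Ψ V < 0 := by
      apply hΨlarge
      have : Real.log (β*A/(2*B))/(β-2) ≤ V := le_max_left _ _
      rw [div_le_iff₀ hb2] at this; linarith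
    have := intermediate_value_Ioo' hV1.le contΨ.continuousOn
    obtain ⟨d, h1, h2⟩ := this ⟨hΨV, hΨt₀⟩
    exact ⟨d, h1, h2⟩
  have hzeros : ∀ s : ℝ, Ψ s = 0 ↔ s = c ∨ s = d := by
    intro s
    constructor
    · intro h
      rcases le_or_gt s s₀ with h1 | h1
      · exact absurd h (ne_of_lt (hΨnegIic s h1))
      · rcases le_or_gt s t₀ with h2 | h2
        · left
          exact monoΨ.injOn ⟨h1.le, h2⟩ ⟨hcmem.1.le, hcmem.2.le⟩ (by rw [h, hΨc])
        · right
          exact antiΨ2.injOn h2.le hdmem.1.le (by rw [h, hΨd])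
    · rintro (rfl | rfl) <;> assumption
  -- s₀ < r₀
  have hs₀r₀ : s₀ < r₀ := by
    by_contra hcon
    push_neg at hcon
    have hs₀r₁ : s₀ < r₁ := by
      by_contra hc2
      push_neg at hc2
      have hy := hpos ((r₀+r₁)/2) ⟨by linarith, by linarith⟩
      have := hΨnegIic ((r₀+r₁)/2) (by linarith)
      linarith
    set x := (s₀ + min r₁ c)/2 with hx
    have hsc : s₀ < min r₁ c := lt_min hs₀r₁ hcmem.1
    have hx1 : s₀ < x := by rw [hx]; linarith
    have hx2 : x < min r₁ c := by rw [hx]; linarith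
    have hxpos : 0 < Ψ x := hpos x ⟨lt_of_le_of_lt hcon hx1, lt_of_lt_of_le hx2 (min_le_left _ _)⟩
    have hxc : x < c := lt_of_lt_of_le hx2 (min_le_right _ _)
    have := monoΨ ⟨hx1.le, (hxc.trans hcmem.2).le⟩ ⟨hcmem.1.le, hcmem.2.le⟩ hxc
    rw [hΨc] at this
    linarith
  -- strict antitone on Ioi t₀
  have hantiIoi : StrictAntiOn Ψ (Ioi t₀) := antiΨ2.mono Ioi_subset_Ici_self
  -- concavity on Ioi t₀
  have hconcave : ConcaveOn ℝ (Ioi t₀) Ψ := by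
    have hderiv_eq : deriv Ψ = fun s => A*Real.exp (2*s) - B*Real.exp (β*s) - C*Real.exp (α*s) :=
      funext fun s => (hΨD s).deriv
    have hD2 : ∀ s : ℝ, HasDerivAt (deriv Ψ)
        (2*A*Real.exp (2*s) - β*B*Real.exp (β*s) - α*C*Real.exp (α*s)) s := by
      intro s
      rw [hderiv_eq]
      have h := (((stmt8_expD 2 s).const_mul A).sub ((stmt8_expD β s).const_mul B)).sub
        ((stmt8_expD α s).const_mul C)
      refine h.congr_deriv ?_
      ring
    apply concaveOn_of_deriv2_nonpos (convex_Ioi _) contΨ.continuousOn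
    · intro x _
      exact (diffΨ x).differentiableWithinAt
    · intro x _
      exact (hD2 x).differentiableAt.differentiableWithinAt
    · intro x hx
      rw [interior_Ioi] at hx
      have hxt : t₀ < x := hx
      have h2 : deriv^[2] Ψ x = 2*A*Real.exp (2*x) - β*B*Real.exp (β*x) - α*C*Real.exp (α*x) := by
        simp only [Function.iterate_succ, Function.iterate_zero, Function.comp_apply, id_eq]
        exact (hD2 x).deriv
      rw [h2]
      -- fact 1: A e2 - B eβ - C eα < 0
      have hf1 : A*Real.exp (2*x) - B*Real.exp (β*x) - C*Real.exp (α*x) < 0 := by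
        have h := mul_neg_of_pos_of_neg (Real.exp_pos (α*x)) (hΦneg3 x hxt)
        rw [← hdp x, hderiv_eq] at h
        simpa using h
      -- fact 2: (2-α) A e2 ≤ (β-α) B eβ
      have hf2 : (2-α)*A*Real.exp (2*x) ≤ (β-α)*B*Real.exp (β*x) := by
        have hxs : sstar < x := hstart₀.trans hxt
        have h3 : (2-α)*A < (β-α)*B*Real.exp ((β-2)*x) := (hiff2 x).2 hxs
        have he2 := Real.exp_pos (2*x)
        rw [hsplitβ2 x]
        nlinarith
      have hf3 : α*(A*Real.exp (2*x) - B*Real.exp (β*x) - C*Real.exp (α*x)) ≤ 0 :=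
        mul_nonpos_iff.2 (Or.inl ⟨hα0.le, hf1.le⟩)
      nlinarith [hf3, hf2]
  exact ⟨s₀, t₀, hst, hcrit, hlocmin, hΨs₀, hs₀r₀, hΨt₀, hglobmax,
    ⟨c, d, hcmem.1, hcmem.2, hdmem.1, hzeros⟩, hantiIoi, hconcave⟩
end

section
/- Let N ≥ 1, 2 < q < p̄ = 2+4/N, and 0 < a < ā_N (where ā_N is the critical mass), and μ > 0. Then the energy E_μ(u) = ∫(½|∇u|² − (1/p̄)|u|^{p̄} − (μ/q)|u|^q) is coercive on S_a = {u ∈ H¹ : |u|₂ = a}: there are constants c₁ > 0, c₂ ≥ 0 and an exponent 0 < θ < 2 such that E_μ(u) ≥ c₁|∇u|₂² − c₂|∇u|₂^θ for all u ∈ S_a, and consequently m(a,μ) = inf_{S_a} E_μ > −∞. Moreover m(a,μ) < 0. -/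
/-!
Gagliardo–Nirenberg bounds `|u|_{p̄}^{p̄} ≤ C^{p̄} a^{p̄-2} |∇u|₂²` and
`|u|_q^q ≤ C' |∇u|₂^{qγ_q}` with `qγ_q < 2` give `E_μ(u) ≥ c₁|∇u|₂² − c₂|∇u|₂^{qγ_q}`, and
`c₁ = 1/2 − C^{p̄} a^{p̄-2}/p̄` is positive exactly because `a` lies below the critical mass.
A positive quadratic beats a subquadratic power, so `E_μ` is bounded below. Along the dilation,
`E_μ(s ⋆ u) = e^{2s}A − e^{qγ_q s}B` with `B > 0`, and the second term wins as `s → −∞`.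
-/

open Real Set

lemma mul_gnExponent_mem_Ioo {N q : ℝ} (hN : 0 < N) (hq : 2 < q) (hqp : q < 2 + 4 / N) :
    q * (N * (q - 2) / (2 * q)) ∈ Ioo 0 2 := by
  have hθ : q * (N * (q - 2) / (2 * q)) = N * (q - 2) / 2 := by field_simp
  have hqN : (q - 2) * N < 4 := (lt_div_iff₀ hN).mp (by linarith)
  rw [hθ]
  constructor <;> nlinarith

lemma half_sub_pos_of_lt_criticalMass {N p C a : ℝ} (hN : 0 < N) (hp : p = 2 + 4 / N)
    (hC : 0 < C) (ha : 0 ≤ a) (h : a < (p / (2 * C ^ p)) ^ (N / 4)) :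
    0 < 1 / 2 - C ^ p * a ^ (p - 2) / p := by
  have hp0 : 0 < p := by rw [hp]; positivity
  have hCp : 0 < C ^ p := rpow_pos_of_pos hC p
  have hlt : a ^ (p - 2) < p / (2 * C ^ p) := by
    rwa [show N / 4 = (4 / N)⁻¹ by rw [inv_div],
      lt_rpow_inv_iff_of_pos ha (by positivity) (by positivity),
      show 4 / N = p - 2 by rw [hp]; ring] at h
  rw [sub_pos, div_lt_iff₀ hp0, ← lt_div_iff₀' hCp]
  linarith [show p / (2 * C ^ p) = 1 / 2 * p / C ^ p by ring]

lemma rpow_le_of_le_mul_rpow_mul_rpow {Q C G a γ r : ℝ} (hQ : 0 ≤ Q) (hC : 0 ≤ C) (hG : 0 ≤ G)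
    (ha : 0 ≤ a) (hr : 0 ≤ r) (h : Q ≤ C * G ^ γ * a ^ (1 - γ)) :
    Q ^ r ≤ C ^ r * G ^ (γ * r) * a ^ ((1 - γ) * r) := by
  refine (rpow_le_rpow hQ h hr).trans_eq ?_
  rw [mul_rpow (by positivity) (by positivity), mul_rpow hC (by positivity),
    ← rpow_mul hG, ← rpow_mul ha]

lemma mul_sq_sub_mul_rpow_le_of_gagliardoNirenberg {G P Q p q μ γ Cp Cq a : ℝ} (hG : 0 ≤ G)
    (hP : 0 ≤ P) (hQ : 0 ≤ Q) (hp : 0 < p) (hq : 0 < q) (hμ : 0 ≤ μ) (hCp : 0 ≤ Cp)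
    (hCq : 0 ≤ Cq) (ha : 0 ≤ a) (hGNp : P ≤ Cp * G ^ (2 / p) * a ^ (1 - 2 / p))
    (hGNq : Q ≤ Cq * G ^ γ * a ^ (1 - γ)) :
    (1 / 2 - Cp ^ p * a ^ (p - 2) / p) * G ^ 2 - μ * (Cq ^ q * a ^ ((1 - γ) * q)) / q * G ^ (q * γ)
      ≤ G ^ 2 / 2 - P ^ p / p - μ * Q ^ q / q := by
  have hPp := rpow_le_of_le_mul_rpow_mul_rpow hP hCp hG ha hp.le hGNp
  rw [show 2 / p * p = 2 by field_simp, rpow_two,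
    show (1 - 2 / p) * p = p - 2 by field_simp] at hPp
  have hQq := rpow_le_of_le_mul_rpow_mul_rpow hQ hCq hG ha hq.le hGNq
  have hPterm : P ^ p / p ≤ Cp ^ p * a ^ (p - 2) / p * G ^ 2 := by
    rw [div_mul_eq_mul_div, mul_right_comm]
    exact div_le_div_of_nonneg_right hPp hp.le
  have hQterm : μ * Q ^ q / q ≤ μ * (Cq ^ q * a ^ ((1 - γ) * q)) / q * G ^ (q * γ) := by
    rw [div_mul_eq_mul_div, mul_assoc, mul_right_comm _ _ (G ^ _), mul_comm q γ]
    exact div_le_div_of_nonneg_right (mul_le_mul_of_nonneg_left hQq hμ) hq.le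
  linarith

-- Split at `T = ε ^ (-1 / (2 - θ))`, where `t ^ θ = ε t²`.
lemma rpow_le_mul_sq_add_rpow {θ ε t : ℝ} (hθ0 : 0 ≤ θ) (hθ2 : θ < 2) (hε : 0 < ε)
    (ht : 0 ≤ t) : t ^ θ ≤ ε * t ^ 2 + ε ^ (-θ / (2 - θ)) := by
  set T : ℝ := ε ^ (-1 / (2 - θ))
  have hT : 0 < T := rpow_pos_of_pos hε _
  rcases le_or_gt t T with htT | hTt
  · have hTθ : T ^ θ = ε ^ (-θ / (2 - θ)) := by
      rw [← rpow_mul hε.le]; ring_nf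
    have := rpow_le_rpow ht htT hθ0
    nlinarith [sq_nonneg t]
  · have ht0 : 0 < t := hT.trans hTt
    have h2θ : 2 - θ ≠ 0 := by linarith
    have hsplit : t ^ θ = t ^ 2 * t ^ (θ - 2) := by
      rw [← rpow_two, ← rpow_add ht0]; ring_nf
    have hTε : T ^ (θ - 2) = ε := by
      rw [← rpow_mul hε.le, show -1 / (2 - θ) * (θ - 2) = 1 by field_simp; ring, rpow_one]
    have hdecay : t ^ (θ - 2) ≤ ε := hTε ▸ rpow_le_rpow_of_nonpos hT hTt.le (by linarith)
    have := rpow_pos_of_pos hε (-θ / (2 - θ))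
    nlinarith [mul_le_mul_of_nonneg_left hdecay (sq_nonneg t)]

lemma exists_forall_le_mul_sq_sub_mul_rpow {c₁ c₂ θ : ℝ} (hc₁ : 0 < c₁) (hc₂ : 0 ≤ c₂)
    (hθ0 : 0 ≤ θ) (hθ2 : θ < 2) : ∃ m, ∀ t, 0 ≤ t → m ≤ c₁ * t ^ 2 - c₂ * t ^ θ := by
  set ε := c₁ / (c₂ + 1)
  have hε : 0 < ε := by positivity
  have hc₂ε : c₂ * ε ≤ c₁ := by
    rw [mul_div_assoc', div_le_iff₀ (by linarith)]; nlinarith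
  refine ⟨-(c₂ * ε ^ (-θ / (2 - θ))), fun t ht => ?_⟩
  have hYoung := mul_le_mul_of_nonneg_left (rpow_le_mul_sq_add_rpow hθ0 hθ2 hε ht) hc₂
  nlinarith [mul_le_mul_of_nonneg_right hc₂ε (sq_nonneg t)]

lemma exists_exp_mul_sub_exp_mul_neg {A B θ : ℝ} (hB : 0 < B) (hθ : θ < 2) :
    ∃ s, exp (2 * s) * A - exp (θ * s) * B < 0 := by
  rcases le_or_gt A 0 with hA | hA
  · exact ⟨0, by simp only [mul_zero, exp_zero, one_mul]; linarith⟩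
  · -- at this `s` the first term is exactly half of the second
    refine ⟨log (B / (2 * A)) / (2 - θ), ?_⟩
    have hexp : exp (2 * (log (B / (2 * A)) / (2 - θ)))
        = exp (θ * (log (B / (2 * A)) / (2 - θ))) * (B / (2 * A)) := by
      rw [← exp_log (show 0 < B / (2 * A) by positivity), ← exp_add, exp_log (by positivity)]
      congr 1
      field_simp [show (2 - θ) ≠ 0 by linarith]
      ring
    rw [hexp, mul_assoc, show B / (2 * A) * A = B / 2 by field_simp, ← mul_sub]
    exact mul_neg_of_pos_of_neg (exp_pos _) (by linarith)

/-- Coercivity and negativity of the infimum of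
`E_μ(u) = ½|∇u|₂² − (1/p̄)|u|_{p̄}^{p̄} − (μ/q)|u|_q^q` on `S_a` when
`2 < q < p̄ = 2+4/N`, `0 < a < ā_N` and `μ > 0`.  Here `X` abstracts the sphere `S_a`,
`Gn u = |∇u|₂`, `Qn u = |u|_q`, `Pn u = |u|_{p̄}`, the Gagliardo–Nirenberg inequalities
with optimal constants are hypotheses (`γ_{p̄} = 2/p̄`), `ā_N = (p̄/(2C_{N,p̄}^{p̄}))^{N/4}`,
and `dil` is the mass-preserving dilation `s ⋆ u`. Conclusion: `E_μ ≥ c₁|∇u|₂² − c₂|∇u|₂^θ`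
with `c₁ > 0`, `c₂ ≥ 0`, `0 < θ < 2`; hence `m(a,μ) = inf E_μ > −∞`; moreover `m(a,μ) < 0`. -/
theorem stmt9 (N : ℕ) (hN : 1 ≤ N) (q a μ pbar γq Cq Cpbar aN : ℝ)
    (hpbar : pbar = 2 + 4 / (N : ℝ))
    (hγq : γq = (N : ℝ) * (q - 2) / (2 * q))
    (hq : 2 < q) (hqp : q < pbar)
    (hCq : 0 < Cq) (hCpbar : 0 < Cpbar)
    (haN : aN = (pbar / (2 * Cpbar ^ pbar)) ^ ((N : ℝ) / 4))
    (ha : 0 < a) (ha' : a < aN) (hμ : 0 < μ)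
    (X : Type) [Nonempty X]
    (Gn Qn Pn E : X → ℝ) (dil : ℝ → X → X)
    (hGn : ∀ u, 0 ≤ Gn u) (hQn : ∀ u, 0 < Qn u) (hPn : ∀ u, 0 ≤ Pn u)
    (hGNq : ∀ u, Qn u ≤ Cq * Gn u ^ γq * a ^ (1 - γq))
    (hGNp : ∀ u, Pn u ≤ Cpbar * Gn u ^ (2 / pbar) * a ^ (1 - 2 / pbar))
    (hE : ∀ u, E u = Gn u ^ 2 / 2 - Pn u ^ pbar / pbar - μ * Qn u ^ q / q)
    (hdilG : ∀ s u, Gn (dil s u) = Real.exp s * Gn u)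
    (hdilQ : ∀ s u, Qn (dil s u) ^ q = Real.exp (q * γq * s) * Qn u ^ q)
    (hdilP : ∀ s u, Pn (dil s u) ^ pbar = Real.exp (2 * s) * Pn u ^ pbar) :
    (∃ c₁ : ℝ, 0 < c₁ ∧ ∃ c₂ : ℝ, 0 ≤ c₂ ∧ ∃ θ : ℝ, 0 < θ ∧ θ < 2 ∧
        ∀ u, c₁ * Gn u ^ 2 - c₂ * Gn u ^ θ ≤ E u) ∧
      BddBelow (Set.range E) ∧
      sInf (Set.range E) < 0 := by
  have hN0 : (0 : ℝ) < N := by exact_mod_cast hN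
  have hpbar0 : 0 < pbar := by rw [hpbar]; positivity
  obtain ⟨hθ0, hθ2⟩ := mul_gnExponent_mem_Ioo hN0 hq (hpbar ▸ hqp)
  rw [← hγq] at hθ0 hθ2
  have hc₁ := half_sub_pos_of_lt_criticalMass hN0 hpbar hCpbar ha.le (haN ▸ ha')
  have hc₂ : 0 ≤ μ * (Cq ^ q * a ^ ((1 - γq) * q)) / q := by positivity
  have key : ∀ u, (1 / 2 - Cpbar ^ pbar * a ^ (pbar - 2) / pbar) * Gn u ^ 2
      - μ * (Cq ^ q * a ^ ((1 - γq) * q)) / q * Gn u ^ (q * γq) ≤ E u := fun u =>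
    hE u ▸ mul_sq_sub_mul_rpow_le_of_gagliardoNirenberg (hGn u) (hPn u) (hQn u).le hpbar0
      (by linarith) hμ.le hCpbar.le hCq.le ha.le (hGNp u) (hGNq u)
  obtain ⟨m, hm⟩ := exists_forall_le_mul_sq_sub_mul_rpow hc₁ hc₂ hθ0.le hθ2
  have hbdd : BddBelow (range E) :=
    ⟨m, forall_mem_range.2 fun u => (hm _ (hGn u)).trans (key u)⟩
  refine ⟨⟨_, hc₁, _, hc₂, _, hθ0, hθ2, key⟩, hbdd, ?_⟩
  obtain ⟨u⟩ := ‹Nonempty X›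
  obtain ⟨s, hs⟩ := exists_exp_mul_sub_exp_mul_neg (A := Gn u ^ 2 / 2 - Pn u ^ pbar / pbar)
    (show 0 < μ * Qn u ^ q / q by have := rpow_pos_of_pos (hQn u) q; positivity) hθ2
  refine (csInf_le hbdd ⟨dil s u, rfl⟩).trans_lt (lt_of_eq_of_lt ?_ hs)
  rw [hE, hdilG, hdilQ, hdilP, mul_pow, ← exp_nat_mul, mul_comm (q * γq) s]
  push_cast
  ring
end

section
/- Let N ≥ 1, 2 < q ≤ p̄ = 2+4/N, 0 < a ≤ ā_N and μ < 0. If u ∈ H¹(ℝ^N) with |u|₂ = a solves −Δu = λu + μ|u|^{q−2}u + |u|^{p̄−2}u for some λ ∈ ℝ, and u satisfies the Pohozaev identity P_μ(u) = |∇u|₂² − (2/p̄)|u|_{p̄}^{p̄} − μγ_q|u|_q^q = 0, then a contradiction arises; i.e., no such solution exists. More precisely: P_μ(u) = 0 combined with inf_{S_a} E_0 ≥ 0 forces 0 > μγ_q|u|_q^q = 2E_0(u) ≥ 0. -/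
lemma gagliardoNirenbergExponent_pos {N q : ℝ} (hN : 0 < N) (hq : 2 < q) :
    0 < N * (q - 2) / (2 * q) :=
  div_pos (mul_pos hN (sub_pos.2 hq)) (by linarith)

lemma eq_two_mul_energy_of_pohozaev {G2 Pp pbar c : ℝ} (hPoh : G2 - (2 / pbar) * Pp - c = 0) :
    c = 2 * (G2 / 2 - Pp / pbar) := by
  linear_combination -hPoh

theorem stmt12_general (N : ℕ) (hN : 1 ≤ N) (q μ pbar γq : ℝ)
    (hγq : γq = (N : ℝ) * (q - 2) / (2 * q))
    (hq : 2 < q) (hμ : μ < 0)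
    (G2 Qq Pp E0 : ℝ)
    (hQq : 0 < Qq)
    (hE0 : E0 = G2 / 2 - Pp / pbar)
    (hPoh : G2 - (2 / pbar) * Pp - μ * γq * Qq = 0)
    (hinf : 0 ≤ E0) :
    False := by
  have hγ : 0 < γq := hγq ▸ gagliardoNirenbergExponent_pos (by exact_mod_cast hN) hq
  have hneg : μ * γq * Qq < 0 := mul_neg_of_neg_of_pos (mul_neg_of_neg_of_pos hμ hγ) hQq
  have hcrit : μ * γq * Qq = 2 * E0 := hE0 ▸ eq_two_mul_energy_of_pohozaev hPoh
  linarith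

/-- Nonexistence for `0 < a ≤ ā_N`, `μ < 0`, `2 < q ≤ p̄ = 2+4/N`: if `u ∈ S_a` solves
the stationary equation, hence satisfies the Pohozaev identity
`|∇u|₂² − (2/p̄)|u|_{p̄}^{p̄} − μγ_q|u|_q^q = 0`, and `inf_{S_a} E₀ ≥ 0`
(so `E₀(u) ≥ 0`), then a contradiction arises: `0 > μγ_q|u|_q^q = 2E₀(u) ≥ 0`.
Here `G2 = |∇u|₂² ≥ 0`, `Qq = |u|_q^q > 0`, `Pp = |u|_{p̄}^{p̄} ≥ 0`. -/
theorem stmt12 (N : ℕ) (hN : 1 ≤ N) (q a μ pbar γq : ℝ)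
    (hpbar : pbar = 2 + 4 / (N : ℝ)) (hγq : γq = (N : ℝ) * (q - 2) / (2 * q))
    (hq : 2 < q) (hqp : q ≤ pbar) (ha : 0 < a) (hμ : μ < 0)
    (G2 Qq Pp E0 : ℝ)
    (hG2 : 0 ≤ G2) (hQq : 0 < Qq) (hPp : 0 ≤ Pp)
    (hE0 : E0 = G2 / 2 - Pp / pbar)
    (hPoh : G2 - (2 / pbar) * Pp - μ * γq * Qq = 0)
    (hinf : 0 ≤ E0) :
    False :=
  stmt12_general N hN q μ pbar γq hγq hq hμ G2 Qq Pp E0 hQq hE0 hPoh hinf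
end

section
/- Let N ≥ 1, q = p̄ = 2+4/N < p < 2*, a, μ > 0 with μ a^{4/N} < p̄/(2C_{N,p̄}^{p̄}). If u ∈ S_a satisfies the Pohozaev constraint P_μ(u) = |∇u|₂² − γ_p|u|_p^p − (2μ/p̄)|u|_{p̄}^{p̄} = 0, then |∇u|₂^{γ_p p − 2} ≥ a^{−(1−γ_p)p}(1 − (2/p̄)C_{N,p̄}^{p̄} μ a^{4/N})/(γ_p C_{N,p}^p) > 0; in particular inf{|∇u|₂ : u ∈ P_{a,μ}} > 0, and E_μ(u) ≥ ½(1 − 2/(γ_p p))(1 − (2/p̄)C_{N,p̄}^{p̄} μ a^{4/N})|∇u|₂², so that m(a,μ) = inf_{P_{a,μ}} E_μ > 0. -/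
/-! On the Pohozaev set the constraint lets one eliminate `|u|_p^p`. The mass-critical term is
controlled by Gagliardo–Nirenberg, `(2μ/p̄)|u|_{p̄}^{p̄} ≤ B |∇u|₂²` with `B < 1` by the smallness
of `μ a^{4/N}`, so `γ_p |u|_p^p ≥ (1 - B)|∇u|₂²`; the Gagliardo–Nirenberg bound on `|u|_p^p`,
whose power `γ_p p` of `|∇u|₂` exceeds `2`, then bounds `|∇u|₂` from below. Substituting the
constraint into `E_μ` gives `E_μ = (1/2 - 1/(γ_p p))(|∇u|₂² - (2μ/p̄)|u|_{p̄}^{p̄})`. -/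

open Real

lemma div_le_rpow_sub_two_of_mul_sq_le {G t c δ : ℝ} (hG : 0 < G) (hc : 0 < c)
    (h : δ * G ^ 2 ≤ c * G ^ t) : δ / c ≤ G ^ (t - 2) := by
  have hsplit : G ^ t = G ^ (t - 2) * G ^ 2 := by
    rw [← rpow_two, ← rpow_add hG, sub_add_cancel]
  rw [hsplit, ← mul_assoc] at h
  rw [div_le_iff₀ hc, mul_comm]
  exact le_of_mul_le_mul_right h (by positivity)

lemma energy_eq_of_pohozaev {G Pp X E γ p : ℝ} (hγp : γ * p ≠ 0)
    (hPoh : G ^ 2 - γ * Pp - X = 0) (hE : E = G ^ 2 / 2 - Pp / p - X / 2) :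
    E = (1 / 2 - 1 / (γ * p)) * (G ^ 2 - X) := by
  have hPp : Pp = (G ^ 2 - X) / γ := by
    rw [eq_div_iff (left_ne_zero_of_mul hγp)]
    linear_combination -hPoh
  rw [hE, hPp]
  field_simp
  ring

lemma div_le_rpow_sub_two_of_pohozaev {G Pp X B K γ t : ℝ} (hG : 0 < G) (hγ : 0 < γ)
    (hK : 0 < K) (hGN : Pp ≤ K * G ^ t) (hX : X ≤ B * G ^ 2)
    (hPoh : G ^ 2 - γ * Pp - X = 0) : (1 - B) / (γ * K) ≤ G ^ (t - 2) :=
  div_le_rpow_sub_two_of_mul_sq_le hG (mul_pos hγ hK) <|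
    calc (1 - B) * G ^ 2 ≤ γ * Pp := by linarith
      _ ≤ γ * (K * G ^ t) := mul_le_mul_of_nonneg_left hGN hγ.le
      _ = γ * K * G ^ t := by ring

lemma energy_lower_bound_of_pohozaev {G Pp X E B γ p : ℝ} (ht : 2 < γ * p)
    (hX : X ≤ B * G ^ 2) (hPoh : G ^ 2 - γ * Pp - X = 0)
    (hE : E = G ^ 2 / 2 - Pp / p - X / 2) :
    (1 / 2) * (1 - 2 / (γ * p)) * (1 - B) * G ^ 2 ≤ E := by
  have hcoef : 0 < 1 / 2 - 1 / (γ * p) := by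
    rw [sub_pos, div_lt_div_iff₀ (by linarith) two_pos]
    linarith
  calc (1 / 2) * (1 - 2 / (γ * p)) * (1 - B) * G ^ 2
      = (1 / 2 - 1 / (γ * p)) * ((1 - B) * G ^ 2) := by ring
    _ ≤ (1 / 2 - 1 / (γ * p)) * (G ^ 2 - X) := by gcongr; linarith
    _ = E := (energy_eq_of_pohozaev (by positivity) hPoh hE).symm

lemma two_lt_gamma_mul_of_lt {N p : ℝ} (hN : 0 < N) (hp : 2 + 4 / N < p) :
    2 < N * (p - 2) / (2 * p) * p := by
  have hp0 : 0 < p := by linarith [div_pos four_pos hN]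
  have h4 : 4 < N * (p - 2) := by
    rw [← div_lt_iff₀' hN]
    linarith
  rw [div_mul_eq_mul_div, lt_div_iff₀ (by positivity)]
  nlinarith

theorem stmt13_general (N : ℕ) (hN : 1 ≤ N) (a μ p pbar γp Cp Cpbar : ℝ)
    (hpbar : pbar = 2 + 4 / (N : ℝ)) (hγp : γp = (N : ℝ) * (p - 2) / (2 * p))
    (hp : pbar < p)
    (ha : 0 < a) (hμ : 0 < μ) (hCp : 0 < Cp) (hCpbar : 0 < Cpbar)
    (hsmall : μ * a ^ ((4 : ℝ) / (N : ℝ)) < pbar / (2 * Cpbar ^ pbar))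
    (G Pp Pbar E : ℝ)
    (hG : 0 ≤ G) (hPbar : 0 < Pbar)
    (hGNp : Pp ≤ Cp ^ p * G ^ (γp * p) * a ^ ((1 - γp) * p))
    (hGNpbar : Pbar ≤ Cpbar ^ pbar * G ^ 2 * a ^ ((4 : ℝ) / (N : ℝ)))
    (hE : E = G ^ 2 / 2 - Pp / p - μ * Pbar / pbar)
    (hPoh : G ^ 2 - γp * Pp - (2 * μ / pbar) * Pbar = 0) :
    (0 < a ^ (-((1 - γp) * p)) * (1 - (2 / pbar) * Cpbar ^ pbar * μ * a ^ ((4 : ℝ) / (N : ℝ)))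
        / (γp * Cp ^ p)) ∧
    a ^ (-((1 - γp) * p)) * (1 - (2 / pbar) * Cpbar ^ pbar * μ * a ^ ((4 : ℝ) / (N : ℝ)))
        / (γp * Cp ^ p) ≤ G ^ (γp * p - 2) ∧
    (1 / 2) * (1 - 2 / (γp * p)) *
        (1 - (2 / pbar) * Cpbar ^ pbar * μ * a ^ ((4 : ℝ) / (N : ℝ))) * G ^ 2 ≤ E ∧
    0 < E := by
  have hNpos : (0 : ℝ) < N := by exact_mod_cast hN
  have hpbar2 : 2 < pbar := by rw [hpbar]; linarith [div_pos four_pos hNpos]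
  have hp0 : 0 < p := by linarith
  have hγ : 0 < γp := by rw [hγp]; exact div_pos (by nlinarith) (by positivity)
  have ht : 2 < γp * p := hγp ▸ two_lt_gamma_mul_of_lt hNpos (hpbar ▸ hp)
  set B := (2 / pbar) * Cpbar ^ pbar * μ * a ^ ((4 : ℝ) / (N : ℝ))
  have hB : 0 < 1 - B := by
    rw [lt_div_iff₀ (by positivity)] at hsmall
    have : B = 2 * Cpbar ^ pbar * (μ * a ^ ((4 : ℝ) / (N : ℝ))) / pbar := by ring
    rw [this, sub_pos, div_lt_one (by linarith)]
    linarith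
  set X := (2 * μ / pbar) * Pbar
  have hXB : X ≤ B * G ^ 2 := by
    calc X ≤ (2 * μ / pbar) * (Cpbar ^ pbar * G ^ 2 * a ^ ((4 : ℝ) / (N : ℝ))) :=
          mul_le_mul_of_nonneg_left hGNpbar (by positivity)
      _ = B * G ^ 2 := by ring
  have hGpos : 0 < G := hG.lt_of_ne' fun hG0 => hPbar.not_ge (by simpa [hG0] using hGNpbar)
  have hgap := div_le_rpow_sub_two_of_pohozaev hGpos hγ (K := Cp ^ p * a ^ ((1 - γp) * p))
    (by positivity) (by linarith) hXB hPoh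
  have hEbound := energy_lower_bound_of_pohozaev ht hXB hPoh (hE.trans (by ring))
  refine ⟨by positivity, ?_, hEbound, hEbound.trans_lt' ?_⟩
  · convert hgap using 1
    rw [rpow_neg ha.le]
    field_simp
  · have h2t : 0 < 1 - 2 / (γp * p) := sub_pos.2 ((div_lt_one (by linarith)).2 ht)
    positivity

/-- Lower bounds on the Pohozaev manifold for `q = p̄ = 2+4/N < p < 2*`, `a, μ > 0` with
`μ a^{4/N} < p̄/(2C_{N,p̄}^{p̄})`.  For `u ∈ S_a` write `G = |∇u|₂ ≥ 0`,
`Pp = |u|_p^p ≥ 0`, `Pbar = |u|_{p̄}^{p̄} > 0`; the Gagliardo–Nirenberg inequalities give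
`Pp ≤ C_{N,p}^p G^{γ_p p} a^{(1−γ_p)p}` and `Pbar ≤ C_{N,p̄}^{p̄} G² a^{4/N}`.  If the
Pohozaev constraint `G² − γ_p Pp − (2μ/p̄)Pbar = 0` holds, then
`G^{γ_p p − 2} ≥ a^{−(1−γ_p)p}(1 − (2/p̄)C_{N,p̄}^{p̄}μa^{4/N})/(γ_p C_{N,p}^p) > 0`
(in particular the gradient norms on `P_{a,μ}` are bounded away from `0`) and
`E_μ(u) ≥ ½(1 − 2/(γ_p p))(1 − (2/p̄)C_{N,p̄}^{p̄}μa^{4/N})G²`, so `E_μ(u) > 0`,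
whence `m(a,μ) = inf_{P_{a,μ}} E_μ > 0`. -/
theorem stmt13 (N : ℕ) (hN : 1 ≤ N) (a μ p pbar γp Cp Cpbar : ℝ)
    (hpbar : pbar = 2 + 4 / (N : ℝ)) (hγp : γp = (N : ℝ) * (p - 2) / (2 * p))
    (hp : pbar < p) (hp2s : N ≤ 2 ∨ p < 2 * (N : ℝ) / ((N : ℝ) - 2))
    (ha : 0 < a) (hμ : 0 < μ) (hCp : 0 < Cp) (hCpbar : 0 < Cpbar)
    (hsmall : μ * a ^ ((4 : ℝ) / (N : ℝ)) < pbar / (2 * Cpbar ^ pbar))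
    (G Pp Pbar E : ℝ)
    (hG : 0 ≤ G) (hPp : 0 ≤ Pp) (hPbar : 0 < Pbar)
    (hGNp : Pp ≤ Cp ^ p * G ^ (γp * p) * a ^ ((1 - γp) * p))
    (hGNpbar : Pbar ≤ Cpbar ^ pbar * G ^ 2 * a ^ ((4 : ℝ) / (N : ℝ)))
    (hE : E = G ^ 2 / 2 - Pp / p - μ * Pbar / pbar)
    (hPoh : G ^ 2 - γp * Pp - (2 * μ / pbar) * Pbar = 0) :
    (0 < a ^ (-((1 - γp) * p)) * (1 - (2 / pbar) * Cpbar ^ pbar * μ * a ^ ((4 : ℝ) / (N : ℝ)))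
        / (γp * Cp ^ p)) ∧
    a ^ (-((1 - γp) * p)) * (1 - (2 / pbar) * Cpbar ^ pbar * μ * a ^ ((4 : ℝ) / (N : ℝ)))
        / (γp * Cp ^ p) ≤ G ^ (γp * p - 2) ∧
    (1 / 2) * (1 - 2 / (γp * p)) *
        (1 - (2 / pbar) * Cpbar ^ pbar * μ * a ^ ((4 : ℝ) / (N : ℝ))) * G ^ 2 ≤ E ∧
    0 < E :=
  stmt13_general N hN a μ p pbar γp Cp Cpbar hpbar hγp hp ha hμ hCp hCpbar hsmall G Pp Pbar E hG
    hPbar hGNp hGNpbar hE hPoh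
end

section
/- Let N ≥ 1, 2 < q ≤ p̄ < p < 2*, a > 0, μ < 0, and suppose E_μ has a positive lower bound m > 0 on P_{a,μ}. Then there exists k > 0 such that for all u ∈ S_a with |∇u|₂² ≤ k one has E_μ(u) > 0, P_μ(u) > 0, and E_μ(u) < m. -/
/-!
For `μ < 0` both terms carrying `μ` have the favourable sign, so `E_μ(u) ≥ ½|∇u|₂² - |u|_p^p / p`
and `P_μ(u) ≥ |∇u|₂² - γ_p |u|_p^p`, with a strict inequality coming from `|u|_q^q > 0`.
Since `γ_p p > 2` (this is `p > p̄`), Gagliardo–Nirenberg makes `|u|_p^p` of order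
`|∇u|₂^{γ_p p} = o(|∇u|₂²)`, which gives positivity for small gradients. Conversely
`E_μ(u) ≤ ½|∇u|₂² + C |μ| |∇u|₂^{γ_q q}` tends to `0` with the gradient, so it drops below `m`.
-/

open Filter Topology

lemma rpow_le_rpow_half_of_sq_le {t k s : ℝ} (ht : 0 ≤ t) (hs : 0 ≤ s) (htk : t ^ 2 ≤ k) :
    t ^ s ≤ k ^ (s / 2) := by
  calc t ^ s = (t ^ 2) ^ (s / 2) := by
        rw [← Real.rpow_natCast, ← Real.rpow_mul ht]; ring_nf
    _ ≤ k ^ (s / 2) := by gcongr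

lemma rpow_le_mul_sq_of_sq_le {t k s : ℝ} (ht : 0 ≤ t) (hs : 2 ≤ s) (htk : t ^ 2 ≤ k) :
    t ^ s ≤ k ^ ((s - 2) / 2) * t ^ 2 := by
  calc t ^ s = t ^ (s - 2) * t ^ 2 := by
        rw [← Real.rpow_natCast, ← Real.rpow_add' ht (by norm_num; linarith)]; norm_num
    _ ≤ k ^ ((s - 2) / 2) * t ^ 2 := by
        gcongr; exact rpow_le_rpow_half_of_sq_le ht (by linarith) htk

lemma mul_le_sq_of_le_mul_rpow {P D γ t k s : ℝ} (hP : P ≤ D * t ^ s) (hD : 0 ≤ D) (hγ : 0 ≤ γ)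
    (ht : 0 ≤ t) (hs : 2 ≤ s) (htk : t ^ 2 ≤ k) (hsmall : γ * D * k ^ ((s - 2) / 2) ≤ 1) :
    γ * P ≤ t ^ 2 :=
  calc γ * P ≤ γ * D * t ^ s := by rw [mul_assoc]; gcongr
    _ ≤ γ * D * (k ^ ((s - 2) / 2) * t ^ 2) := by
        gcongr; exact rpow_le_mul_sq_of_sq_le ht hs htk
    _ ≤ 1 * t ^ 2 := by rw [← mul_assoc]; gcongr
    _ = t ^ 2 := one_mul _

lemma tendsto_const_mul_rpow_nhds_zero (c : ℝ) {α : ℝ} (hα : 0 < α) :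
    Tendsto (fun k : ℝ => c * k ^ α) (𝓝 0) (𝓝 0) := by
  simpa [Real.zero_rpow hα.ne'] using
    ((Real.continuous_rpow_const hα.le).const_mul c).tendsto 0

lemma exists_pos_const_mul_rpow_lt_one_and_half_add_lt (c d : ℝ) {α β m : ℝ} (hα : 0 < α)
    (hβ : 0 < β) (hm : 0 < m) : ∃ k > 0, c * k ^ α < 1 ∧ k / 2 + d * k ^ β < m := by
  have hsmall : Tendsto (fun k : ℝ => k / 2 + d * k ^ β) (𝓝 0) (𝓝 0) := by
    simpa using (tendsto_id.div_const 2).add (tendsto_const_mul_rpow_nhds_zero d hβ)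
  obtain ⟨k, hk, hk0⟩ := ((eventually_nhdsWithin_of_eventually_nhds
    (((tendsto_const_mul_rpow_nhds_zero c hα).eventually_lt_const one_pos).and
      (hsmall.eventually_lt_const hm))).and (self_mem_nhdsWithin (s := Set.Ioi 0))).exists
  exact ⟨k, hk0, hk⟩

lemma energy_pos_and_pohozaev_pos {t P Q μ p q γp γq : ℝ} (hP : 0 ≤ P) (hQ : 0 < Q)
    (hμ : μ < 0) (hp : 0 < p) (hq : 0 < q) (hγpp : 2 ≤ γp * p) (hγq : 0 < γq)
    (hPt : γp * P ≤ t ^ 2) :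
    0 < t ^ 2 / 2 - P / p - μ * Q / q ∧ 0 < t ^ 2 - γp * P - μ * γq * Q := by
  have hPp : P / p ≤ γp * P / 2 := by
    rw [div_le_div_iff₀ hp two_pos]; nlinarith
  have hμQ : μ * Q / q < 0 := div_neg_of_neg_of_pos (mul_neg_of_neg_of_pos hμ hQ) hq
  have hμγQ : μ * γq * Q < 0 := mul_neg_of_neg_of_pos (mul_neg_of_neg_of_pos hμ hγq) hQ
  constructor <;> linarith

noncomputable def gnExponent (N p : ℝ) : ℝ := N * (p - 2) / (2 * p)

lemma gnExponent_pos {N p : ℝ} (hN : 0 < N) (hp : 2 < p) : 0 < gnExponent N p :=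
  div_pos (mul_pos hN (by linarith)) (by linarith)

lemma two_lt_gnExponent_mul {N p : ℝ} (hN : 0 < N) (hp : 2 + 4 / N < p) :
    2 < gnExponent N p * p := by
  have h4 : 4 < (p - 2) * N := (div_lt_iff₀ hN).1 (by linarith)
  have hp0 : p ≠ 0 := by linarith [div_pos four_pos hN]
  rw [gnExponent, div_mul_eq_mul_div, mul_div_mul_right _ _ hp0]
  linarith

theorem stmt15_general (N : ℕ) (hN : 1 ≤ N) (a μ q p pbar γp γq Cp Cq m : ℝ)
    (hpbar : pbar = 2 + 4 / (N : ℝ)) (hγp : γp = (N : ℝ) * (p - 2) / (2 * p))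
    (hγq : γq = (N : ℝ) * (q - 2) / (2 * q))
    (hq : 2 < q) (hp : pbar < p)
    (ha : 0 < a) (hμ : μ < 0) (hCp : 0 < Cp) (hCq : 0 < Cq) (hm : 0 < m)
    (X : Type) (Gn Pp Qq E Pf : X → ℝ)
    (hGn : ∀ u, 0 ≤ Gn u) (hPp : ∀ u, 0 ≤ Pp u) (hQq : ∀ u, 0 < Qq u)
    (hGNp : ∀ u, Pp u ≤ Cp ^ p * a ^ ((1 - γp) * p) * Gn u ^ (γp * p))
    (hGNq : ∀ u, Qq u ≤ Cq ^ q * a ^ ((1 - γq) * q) * Gn u ^ (γq * q))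
    (hE : ∀ u, E u = Gn u ^ 2 / 2 - Pp u / p - μ * Qq u / q)
    (hPf : ∀ u, Pf u = Gn u ^ 2 - γp * Pp u - μ * γq * Qq u) :
    ∃ k : ℝ, 0 < k ∧ ∀ u, Gn u ^ 2 ≤ k → 0 < E u ∧ 0 < Pf u ∧ E u < m := by
  have hN0 : (0 : ℝ) < N := by exact_mod_cast hN
  have hγpp : 2 < γp * p := by rw [hγp]; exact two_lt_gnExponent_mul hN0 (hpbar ▸ hp)
  have hγq0 : 0 < γq := by rw [hγq]; exact gnExponent_pos hN0 hq
  have hq0 : 0 < q := by linarith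
  have hp0 : 0 < p := by rw [hpbar] at hp; linarith [div_pos four_pos hN0]
  have hγp0 : 0 < γp := by nlinarith
  set Dp := Cp ^ p * a ^ ((1 - γp) * p)
  set Dq := Cq ^ q * a ^ ((1 - γq) * q)
  obtain ⟨k, hk0, hkP, hkE⟩ := exists_pos_const_mul_rpow_lt_one_and_half_add_lt (γp * Dp)
    (-μ / q * Dq) (α := (γp * p - 2) / 2) (β := γq * q / 2) (by linarith) (by positivity) hm
  refine ⟨k, hk0, fun u hu => ?_⟩
  have hP : γp * Pp u ≤ Gn u ^ 2 := mul_le_sq_of_le_mul_rpow (hGNp u) (by positivity)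
    hγp0.le (hGn u) hγpp.le hu hkP.le
  have hQ : Qq u ≤ Dq * k ^ (γq * q / 2) := (hGNq u).trans <| by
    gcongr; exact rpow_le_rpow_half_of_sq_le (hGn u) (by positivity) hu
  obtain ⟨hE0, hPf0⟩ :=
    energy_pos_and_pohozaev_pos (hPp u) (hQq u) hμ hp0 hq0 hγpp.le hγq0 hP
  refine ⟨hE u ▸ hE0, hPf u ▸ hPf0, ?_⟩
  have hμq : 0 ≤ -μ / q := div_nonneg (by linarith) hq0.le
  calc E u ≤ Gn u ^ 2 / 2 + -μ / q * Qq u := by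
        rw [hE]; linarith [div_nonneg (hPp u) hp0.le, show -μ / q * Qq u = -(μ * Qq u / q) by ring]
    _ ≤ k / 2 + -μ / q * Dq * k ^ (γq * q / 2) := by
        rw [mul_assoc]; gcongr
    _ < m := hkE

/-- Lemma 7.4: let `2 < q ≤ p̄ < p < 2*`, `a > 0`, `μ < 0`, and suppose `E_μ ≥ m > 0` on
the Pohozaev set `P_{a,μ}`.  Then there exists `k > 0` such that every `u ∈ S_a` with
`|∇u|₂² ≤ k` satisfies `E_μ(u) > 0`, `P_μ(u) > 0` and `E_μ(u) < m`.  Here `X` abstracts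
`S_a`, `Gn u = |∇u|₂`, `Pp u = |u|_p^p`, `Qq u = |u|_q^q`, with the Gagliardo–Nirenberg
bounds as hypotheses, `E u = E_μ(u)` and `Pf u = P_μ(u)`. -/
theorem stmt15 (N : ℕ) (hN : 1 ≤ N) (a μ q p pbar γp γq Cp Cq m : ℝ)
    (hpbar : pbar = 2 + 4 / (N : ℝ)) (hγp : γp = (N : ℝ) * (p - 2) / (2 * p))
    (hγq : γq = (N : ℝ) * (q - 2) / (2 * q))
    (hq : 2 < q) (hqp : q ≤ pbar) (hp : pbar < p)
    (hp2s : N ≤ 2 ∨ p < 2 * (N : ℝ) / ((N : ℝ) - 2))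
    (ha : 0 < a) (hμ : μ < 0) (hCp : 0 < Cp) (hCq : 0 < Cq) (hm : 0 < m)
    (X : Type) (Gn Pp Qq E Pf : X → ℝ)
    (hGn : ∀ u, 0 ≤ Gn u) (hPp : ∀ u, 0 ≤ Pp u) (hQq : ∀ u, 0 < Qq u)
    (hGNp : ∀ u, Pp u ≤ Cp ^ p * a ^ ((1 - γp) * p) * Gn u ^ (γp * p))
    (hGNq : ∀ u, Qq u ≤ Cq ^ q * a ^ ((1 - γq) * q) * Gn u ^ (γq * q))
    (hE : ∀ u, E u = Gn u ^ 2 / 2 - Pp u / p - μ * Qq u / q)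
    (hPf : ∀ u, Pf u = Gn u ^ 2 - γp * Pp u - μ * γq * Qq u)
    (hmP : ∀ u, Pf u = 0 → m ≤ E u) :
    ∃ k : ℝ, 0 < k ∧ ∀ u, Gn u ^ 2 ≤ k → 0 < E u ∧ 0 < Pf u ∧ E u < m :=
  stmt15_general N hN a μ q p pbar γp γq Cp Cq m hpbar hγp hγq hq hp ha hμ hCp hCq hm X Gn Pp Qq E
    Pf hGn hPp hQq hGNp hGNq hE hPf
end
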